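/- arXiv:2406.13460 — 7 statements merged into one kernel-verified Lean document; each statement's English description precedes it below -/
import Mathlib

section
/- Let (X, 𝓑, μ, f) be a measure-preserving system and {E_n} a sequence of measurable subsets of X with E_{n₁} ⊆ E_{n₂} whenever n₁ ≥ n₂, and μ(E_n) → 0. Define H_r as the set of points x such that for infinitely many n, at least r of the events {f^{-k}E_n : 1 ≤ k ≤ n} contain x. Then μ(H_r Δ f^{-1}H_r) = 0, i.e., H_r is essentially f-invariant. -/
/-!
If `f x` avoids some `E n₀`, then for every `n > n₀` each hit `f^[k] x ∈ E n` has `k ≥ 2` and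
gives the hit `f^[k-1] (f x) ∈ E n ⊆ E (n - 1)`, so `N_n(x) ≤ N_{n-1}(f x)`. Hence
`H_r \ f⁻¹ H_r ⊆ f⁻¹ (⋂ n, E n)`, which is null. Since `f` preserves the finite measure `μ`,
`μ (f⁻¹ H_r) = μ H_r`, so `H_r ⊆ f⁻¹ H_r` up to a null set forces equality up to a null set.
-/

open MeasureTheory Filter Set
open scoped symmDiff

section HitCount

variable {X : Type*} (f : X → X) (A : Set X)

lemma ncard_iterate_mem_eq_sum_indicator (n : ℕ) (x : X) :
    {k | 1 ≤ k ∧ k ≤ n ∧ f^[k] x ∈ A}.ncard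
      = ∑ k ∈ Finset.Icc 1 n, (f^[k] ⁻¹' A).indicator 1 x := by
  classical
  have : {k | 1 ≤ k ∧ k ≤ n ∧ f^[k] x ∈ A}
      = ↑((Finset.Icc 1 n).filter (fun k => f^[k] x ∈ A)) := by
    ext k; simp [and_assoc]
  rw [this, ncard_coe_finset, Finset.card_filter]
  simp only [indicator_apply, mem_preimage, Pi.one_apply]

lemma measurable_ncard_iterate_mem [MeasurableSpace X] {f : X → X} (hf : Measurable f)
    {A : Set X} (hA : MeasurableSet A) (n : ℕ) :
    Measurable fun x => {k | 1 ≤ k ∧ k ≤ n ∧ f^[k] x ∈ A}.ncard := by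
  simp_rw [ncard_iterate_mem_eq_sum_indicator]
  exact Finset.measurable_sum _ fun k _ => measurable_const.indicator (hf.iterate k hA)

lemma ncard_iterate_mem_le_of_apply_notMem {A B : Set X} (hAB : A ⊆ B) {x : X} (hx : f x ∉ A)
    (n : ℕ) :
    {k | 1 ≤ k ∧ k ≤ n ∧ f^[k] x ∈ A}.ncard
      ≤ {k | 1 ≤ k ∧ k ≤ n - 1 ∧ f^[k] (f x) ∈ B}.ncard := by
  have hsub : {k | 1 ≤ k ∧ k ≤ n ∧ f^[k] x ∈ A}
      ⊆ (· + 1) '' {k | 1 ≤ k ∧ k ≤ n - 1 ∧ f^[k] (f x) ∈ B} := by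
    rintro (_ | _ | k) ⟨h1, h2, h3⟩
    · omega
    · exact absurd h3 hx
    · exact ⟨k + 1, ⟨by omega, by omega, hAB h3⟩, rfl⟩
  have hfin : {k | 1 ≤ k ∧ k ≤ n - 1 ∧ f^[k] (f x) ∈ B}.Finite :=
    (finite_Icc 1 (n - 1)).subset fun k hk => ⟨hk.1, hk.2.1⟩
  calc _ ≤ _ := ncard_le_ncard hsub (hfin.image _)
    _ = _ := ncard_image_of_injective _ (add_left_injective 1)

end HitCount

lemma MeasureTheory.MeasurePreserving.measure_symmDiff_preimage_eq_zero {X : Type*}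
    [MeasurableSpace X] {μ : Measure X} [IsFiniteMeasure μ] {f : X → X} (hf : MeasurePreserving f μ μ) {s : Set X}
    (hs : NullMeasurableSet s μ) (hsf : μ (s \ f ⁻¹' s) = 0) : μ (s ∆ (f ⁻¹' s)) = 0 :=
  measure_symmDiff_eq_zero_iff.2 <|
    ae_eq_of_ae_subset_of_measure_ge (ae_le_set.2 hsf) (hf.measure_preimage hs).le hs
      (measure_ne_top μ _)

section FrequentHits

variable {X : Type*} (f : X → X) (E : ℕ → Set X) (r : ℕ)

def frequentHits : Set X :=
  ⋂ m, ⋃ n, ⋃ (_ : m ≤ n), {x | r ≤ {k | 1 ≤ k ∧ k ≤ n ∧ f^[k] x ∈ E n}.ncard}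

variable {f E}

lemma measurableSet_frequentHits [MeasurableSpace X] (hf : Measurable f)
    (hE : ∀ n, MeasurableSet (E n)) : MeasurableSet (frequentHits f E r) :=
  .iInter fun _ => .iUnion fun n => .iUnion fun _ =>
    measurable_ncard_iterate_mem hf (hE n) n measurableSet_Ici

lemma frequentHits_diff_preimage_subset (hE : Antitone E) :
    frequentHits f E r \ f ⁻¹' frequentHits f E r ⊆ f ⁻¹' ⋂ n, E n := by
  intro x ⟨hx, hfx⟩
  by_contra hxE
  obtain ⟨n₀, hn₀⟩ : ∃ n₀, f x ∉ E n₀ := by simpa using hxE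
  refine hfx (mem_iInter.2 fun m => ?_)
  obtain ⟨n, hn, hrn⟩ : ∃ n, max (m + 1) n₀ ≤ n ∧
      r ≤ {k | 1 ≤ k ∧ k ≤ n ∧ f^[k] x ∈ E n}.ncard := by
    simpa using mem_iInter.1 hx (max (m + 1) n₀)
  refine mem_iUnion₂.2 ⟨n - 1, by omega, ?_⟩
  exact hrn.trans <| ncard_iterate_mem_le_of_apply_notMem f (hE (n.sub_le 1))
    (fun h => hn₀ (hE (le_of_max_le_right hn) h)) n

end FrequentHits

theorem stmt0_general {X : Type*} [MeasurableSpace X] (μ : Measure X) [IsProbabilityMeasure μ]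
    (f : X → X) (hf : MeasurePreserving f μ μ)
    (E : ℕ → Set X) (hmeas : ∀ n, MeasurableSet (E n))
    (hmono : ∀ n₁ n₂, n₂ ≤ n₁ → E n₁ ⊆ E n₂)
    (hlim : Tendsto (fun n => μ (E n)) atTop (nhds 0))
    (r : ℕ) :
    μ (symmDiff
        (⋂ m, ⋃ n, ⋃ (_ : m ≤ n),
          {x | r ≤ Set.ncard {k | 1 ≤ k ∧ k ≤ n ∧ f^[k] x ∈ E n}})
        (f ⁻¹' (⋂ m, ⋃ n, ⋃ (_ : m ≤ n),
          {x | r ≤ Set.ncard {k | 1 ≤ k ∧ k ≤ n ∧ f^[k] x ∈ E n}}))) = 0 := by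
  have hnull : μ (f ⁻¹' ⋂ n, E n) = 0 := by
    rw [hf.measure_preimage (MeasurableSet.iInter hmeas).nullMeasurableSet]
    exact le_antisymm (ge_of_tendsto' hlim fun n => measure_mono (iInter_subset E n)) zero_le
  exact hf.measure_symmDiff_preimage_eq_zero
    (measurableSet_frequentHits r hf.measurable hmeas).nullMeasurableSet
    (measure_mono_null (frequentHits_diff_preimage_subset r fun _ _ h => hmono _ _ h) hnull)

theorem stmt0 {X : Type*} [MeasurableSpace X] (μ : Measure X) [IsProbabilityMeasure μ]
    (f : X → X) (hf : MeasurePreserving f μ μ)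
    (E : ℕ → Set X) (hmeas : ∀ n, MeasurableSet (E n))
    (hmono : ∀ n₁ n₂, n₂ ≤ n₁ → E n₁ ⊆ E n₂)
    (hlim : Tendsto (fun n => μ (E n)) atTop (nhds 0))
    (r : ℕ) (hr : 1 ≤ r) :
    μ (symmDiff
        (⋂ m, ⋃ n, ⋃ (_ : m ≤ n),
          {x | r ≤ Set.ncard {k | 1 ≤ k ∧ k ≤ n ∧ f^[k] x ∈ E n}})
        (f ⁻¹' (⋂ m, ⋃ n, ⋃ (_ : m ≤ n),
          {x | r ≤ Set.ncard {k | 1 ≤ k ∧ k ≤ n ∧ f^[k] x ∈ E n}}))) = 0 :=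
  stmt0_general μ f hf E hmeas hmono hlim r
end

section
/- Let (X, 𝓑, μ, f) be a measure-preserving system with μ ergodic, and {E_n} a decreasing (in n) sequence of measurable sets with μ(E_n) → 0. Then the set H_r of points x such that f^k(x) ∈ E_n for at least r values of k in {1,...,n}, for infinitely many n, has measure 0 or 1. -/
/-!
Write `H` for the set of points that, for infinitely many `n`, visit `E n` at least `r` times
among the times `1, …, n`. If `x ∈ H` and `f x` avoids some `E N`, then every visit of `x` to
`E n` with `n > N` happens at a time `k ≥ 2`, hence is a visit of `f x` to `E (n - 1) ⊇ E n` at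
time `k - 1 ≤ n - 1`; so `f x ∈ H`. The exceptional points lie in `f⁻¹' ⋂ n, E n`, which is null
because `μ (E n) → 0`. Thus `H` is almost invariant, and ergodicity makes it null or conull.
-/

open MeasureTheory Filter

section HitTimes

variable {X : Type*} (f : X → X) (s : Set X) (n : ℕ) (x : X)

def hitTimes : Set ℕ := {k | 1 ≤ k ∧ k ≤ n ∧ f^[k] x ∈ s}

lemma hitTimes_subset_Icc : hitTimes f s n x ⊆ Set.Icc 1 n := fun _ hk => ⟨hk.1, hk.2.1⟩

lemma finite_hitTimes : (hitTimes f s n x).Finite :=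
  (Set.finite_Icc 1 n).subset (hitTimes_subset_Icc f s n x)

lemma hitTimes_eq_filter [DecidablePred (· ∈ s)] :
    hitTimes f s n x = ↑({k ∈ Finset.Icc 1 n | f^[k] x ∈ s}) := by
  ext k
  simp [hitTimes, and_assoc]

variable {f s n x}

lemma hitTimes_subset_succ_image {t : Set X} (hst : s ⊆ t) (hx : f x ∉ s) :
    hitTimes f s n x ⊆ (· + 1) '' hitTimes f t (n - 1) (f x) := by
  rintro k ⟨hk1, hkn, hks⟩
  obtain ⟨j, rfl⟩ : ∃ j, k = j + 1 := ⟨k - 1, by omega⟩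
  have hj : 1 ≤ j := by
    by_contra! hj
    obtain rfl : j = 0 := by omega
    exact hx hks
  exact ⟨j, ⟨hj, by omega, hst (by rwa [Function.iterate_succ_apply] at hks)⟩, rfl⟩

lemma ncard_hitTimes_le_of_apply_notMem {t : Set X} (hst : s ⊆ t) (hx : f x ∉ s) :
    (hitTimes f s n x).ncard ≤ (hitTimes f t (n - 1) (f x)).ncard :=
  calc (hitTimes f s n x).ncard
      ≤ ((· + 1) '' hitTimes f t (n - 1) (f x)).ncard :=
        Set.ncard_le_ncard (hitTimes_subset_succ_image hst hx) ((finite_hitTimes ..).image _)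
    _ = (hitTimes f t (n - 1) (f x)).ncard := Set.ncard_image_of_injective _ (add_left_injective 1)

variable [MeasurableSpace X]

lemma measurable_ncard_hitTimes (hf : Measurable f) (hs : MeasurableSet s) :
    Measurable fun x => (hitTimes f s n x).ncard := by
  classical
  simp_rw [hitTimes_eq_filter, Set.ncard_coe_finset, Finset.card_filter]
  exact Finset.measurable_sum _ fun k _ =>
    Measurable.ite (hf.iterate k hs) measurable_const measurable_const

end HitTimes

section LimsupHitSet

variable {X : Type*} (f : X → X) (E : ℕ → Set X) (r : ℕ)

def limsupHitSet : Set X := ⋂ m, ⋃ n, ⋃ (_ : m ≤ n), {x | r ≤ (hitTimes f (E n) n x).ncard}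

variable {f E r}

lemma mem_limsupHitSet_iff {x : X} :
    x ∈ limsupHitSet f E r ↔ ∀ m, ∃ n, m ≤ n ∧ r ≤ (hitTimes f (E n) n x).ncard := by
  simp [limsupHitSet]

lemma apply_mem_limsupHitSet (hE : Antitone E) {x : X} (hx : x ∈ limsupHitSet f E r)
    (hfx : f x ∉ ⋂ n, E n) : f x ∈ limsupHitSet f E r := by
  obtain ⟨N, hN⟩ : ∃ N, f x ∉ E N := by simpa using hfx
  rw [mem_limsupHitSet_iff] at hx ⊢
  intro m
  obtain ⟨n, hn, hr⟩ := hx (max (m + 1) (N + 1))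
  refine ⟨n - 1, by omega, hr.trans (ncard_hitTimes_le_of_apply_notMem (hE (by omega)) ?_)⟩
  exact fun h => hN (hE (by omega) h)

variable [MeasurableSpace X] {μ : Measure X}

lemma measurableSet_limsupHitSet (hf : Measurable f) (hE : ∀ n, MeasurableSet (E n)) :
    MeasurableSet (limsupHitSet f E r) :=
  .iInter fun _ => .iUnion fun n => .iUnion fun _ =>
    measurable_ncard_hitTimes hf (hE n) measurableSet_Ici

lemma limsupHitSet_ae_le_preimage (hE : Antitone E)
    (hnull : μ (f ⁻¹' ⋂ n, E n) = 0) :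
    limsupHitSet f E r ≤ᵐ[μ] f ⁻¹' limsupHitSet f E r := by
  rw [ae_le_set]
  refine measure_mono_null (fun x ⟨hx, hfx⟩ => ?_) hnull
  by_contra h
  exact hfx (apply_mem_limsupHitSet hE hx h)

end LimsupHitSet

lemma measure_iInter_eq_zero_of_tendsto {X : Type*} [MeasurableSpace X] {μ : Measure X}
    {E : ℕ → Set X} (h : Tendsto (fun n => μ (E n)) atTop (nhds 0)) : μ (⋂ n, E n) = 0 :=
  le_antisymm (ge_of_tendsto' h fun n => measure_mono (Set.iInter_subset E n)) zero_le

lemma Ergodic.measure_eq_zero_or_one_of_ae_le_preimage {X : Type*} [MeasurableSpace X]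
    {μ : Measure X} [IsProbabilityMeasure μ] {f : X → X} (hf : Ergodic f μ) {s : Set X}
    (hs : NullMeasurableSet s μ) (hfs : s ≤ᵐ[μ] f ⁻¹' s) : μ s = 0 ∨ μ s = 1 := by
  rcases hf.ae_empty_or_univ_of_ae_le_preimage hs hfs with h | h
  · exact .inl (by rw [measure_congr h, measure_empty])
  · exact .inr (by rw [measure_congr h, measure_univ])

theorem stmt1_general {X : Type*} [MeasurableSpace X] (μ : Measure X) [IsProbabilityMeasure μ]
    (f : X → X) (herg : Ergodic f μ)
    (E : ℕ → Set X) (hmeas : ∀ n, MeasurableSet (E n))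
    (hmono : ∀ n₁ n₂, n₂ ≤ n₁ → E n₁ ⊆ E n₂)
    (hlim : Tendsto (fun n => μ (E n)) atTop (nhds 0))
    (r : ℕ) :
    μ (⋂ m, ⋃ n, ⋃ (_ : m ≤ n),
        {x | r ≤ Set.ncard {k | 1 ≤ k ∧ k ≤ n ∧ f^[k] x ∈ E n}}) = 0 ∨
    μ (⋂ m, ⋃ n, ⋃ (_ : m ≤ n),
        {x | r ≤ Set.ncard {k | 1 ≤ k ∧ k ≤ n ∧ f^[k] x ∈ E n}}) = 1 := by
  have hf := herg.toMeasurePreserving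
  have hE : Antitone E := fun a b h => hmono b a h
  have hnull : μ (f ⁻¹' ⋂ n, E n) = 0 :=
    hf.quasiMeasurePreserving.preimage_null (measure_iInter_eq_zero_of_tendsto hlim)
  exact herg.measure_eq_zero_or_one_of_ae_le_preimage
    (measurableSet_limsupHitSet hf.measurable hmeas).nullMeasurableSet
    (limsupHitSet_ae_le_preimage hE hnull)

theorem stmt1 {X : Type*} [MeasurableSpace X] (μ : Measure X) [IsProbabilityMeasure μ]
    (f : X → X) (hf : MeasurePreserving f μ μ) (herg : Ergodic f μ)
    (E : ℕ → Set X) (hmeas : ∀ n, MeasurableSet (E n))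
    (hmono : ∀ n₁ n₂, n₂ ≤ n₁ → E n₁ ⊆ E n₂)
    (hlim : Tendsto (fun n => μ (E n)) atTop (nhds 0))
    (r : ℕ) (hr : 1 ≤ r) :
    μ (⋂ m, ⋃ n, ⋃ (_ : m ≤ n),
        {x | r ≤ Set.ncard {k | 1 ≤ k ∧ k ≤ n ∧ f^[k] x ∈ E n}}) = 0 ∨
    μ (⋂ m, ⋃ n, ⋃ (_ : m ≤ n),
        {x | r ≤ Set.ncard {k | 1 ≤ k ∧ k ≤ n ∧ f^[k] x ∈ E n}}) = 1 :=
  stmt1_general μ f herg E hmeas hmono hlim r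
end

section
/- Let (Ω, 𝓕, ℙ) be a probability space and {E_{n,k}} (1 ≤ k ≤ 2n) a family of events such that E_{n₁,k} ⊆ E_{n₂,k} for n₁ ≥ n₂. Suppose there are constants C > 0 and a sequence σ_n with σ_{n₁} ≤ σ_{n₂} for n₁ ≥ n₂, a function s(n) ≤ C(ln n)² such that: (GM1) for any 0 < k₁ < ... < k_r ≤ n with all gaps k_{j+1} - k_j ≥ s(n) (taking k₀ = 0), C^{-1}σ_n^r ≤ ℙ(⋂_j E_{n,k_j}) ≤ Cσ_n^r, and (GM2) if exactly m < r gaps are ≥ s(n), then ℙ(⋂_j E_{n,k_j}) ≤ Cσ_n^m (ln n)^{-100r}. If Σ_{j≥1} 2^{rj} σ_{2^j}^r < ∞, then ℙ(H_r) = 0, where H_r is the set of ω lying in at least r of the events E_{n,1},...,E_{n,n} for infinitely many n. -/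
/-!
If `ω` lies in `r` of the events `E n k` with `2 ^ j ≤ n < 2 ^ (j + 1)`, pick such an `r`-set
`S ⊆ [1, 2 ^ (j + 1)]`. By monotonicity in `n`, `ω` also lies in `E N k` for `k ∈ S`, where
`N = max (2 ^ j) (max S)` depends on `S` only; so `H_r` is contained in `limsup_j B_j`, with
`B_j` the union over such `S` of `⋂_{k ∈ S} E N k`.

A tuple is determined by its gap vector. Gaps `≥ s(N)` take at most `2 ^ (j + 1)` values,
the others fewer than `s(N) = O(j ^ 2)`. Summing (GM1) and (GM2) over the gap patterns gives
`P(B_j) ≤ C 2 ^ r 2 ^ (r j) σ_{2^j} ^ r + O(j ^ (2 r) / j ^ (100 r))`, which is summable, and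
Borel–Cantelli concludes.
-/

open MeasureTheory Filter Finset
open scoped ENNReal

namespace MultipleBorelCantelli

/-- The paper's tuple `k₀ = 0 < k₁ < ⋯ < k_r` listing `S`; it is `0` beyond index `#S`. -/
def tuple (S : Finset ℕ) (i : ℕ) : ℕ := (0 :: S.sort).getD i 0

section Tuple

variable {S : Finset ℕ} {i : ℕ}

@[simp] lemma tuple_zero (S : Finset ℕ) : tuple S 0 = 0 := rfl

lemma tuple_succ (hi : i < #S) : tuple S (i + 1) = S.sort[i]'(by rwa [length_sort]) := by
  rw [tuple, List.getD_eq_getElem _ _ (by simpa using hi)]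
  rfl

lemma tuple_succ_mem (hi : i < #S) : tuple S (i + 1) ∈ S := by
  rw [tuple_succ hi, ← mem_sort (· ≤ ·)]
  exact List.getElem_mem _

lemma exists_tuple_succ_eq {x : ℕ} (hx : x ∈ S) : ∃ i < #S, tuple S (i + 1) = x := by
  obtain ⟨i, hi, rfl⟩ := List.mem_iff_getElem.1 ((mem_sort (· ≤ ·)).2 hx)
  rw [length_sort] at hi
  exact ⟨i, hi, tuple_succ hi⟩

lemma tuple_le_sup (hi : i ≤ #S) : tuple S i ≤ S.sup id := by
  cases i with
  | zero => exact Nat.zero_le _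
  | succ i => exact le_sup (f := id) (tuple_succ_mem hi)

lemma tuple_lt_tuple_succ (hpos : ∀ x ∈ S, 0 < x) (hi : i < #S) : tuple S i < tuple S (i + 1) := by
  cases i with
  | zero => exact hpos _ (tuple_succ_mem hi)
  | succ i =>
    rw [tuple_succ (by omega), tuple_succ hi]
    exact (sortedLT_sort S).getElem_lt_getElem_iff.2 (Nat.lt_succ_self i)

lemma biInter_tuple {α : Type*} (E : ℕ → Set α) :
    ⋂ i ∈ Icc 1 #S, E (tuple S i) = ⋂ k ∈ S, E k := by
  ext ω
  simp only [Set.mem_iInter, mem_Icc]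
  constructor
  · intro h k hk
    obtain ⟨i, hi, rfl⟩ := exists_tuple_succ_eq hk
    exact h _ ⟨by omega, hi⟩
  · rintro h (_ | i) ⟨hi₁, hi₂⟩
    · omega
    · exact h _ (tuple_succ_mem hi₂)

end Tuple

def gaps (r : ℕ) (S : Finset ℕ) (i : Fin r) : ℕ := tuple S (i + 1) - tuple S i

lemma gaps_injOn {r : ℕ} : Set.InjOn (gaps r) {S | #S = r ∧ ∀ x ∈ S, 0 < x} := by
  rintro S ⟨hS, hSpos⟩ S' ⟨hS', hS'pos⟩ h
  have htuple : ∀ i ≤ r, tuple S i = tuple S' i := by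
    intro i hi
    induction i with
    | zero => rfl
    | succ i ih =>
      have hgap := congrFun h ⟨i, by omega⟩
      have hlt := tuple_lt_tuple_succ hSpos (i := i) (by omega)
      have hlt' := tuple_lt_tuple_succ hS'pos (i := i) (by omega)
      have heq := ih (by omega)
      simp only [gaps] at hgap
      omega
  ext x
  constructor
  · intro hx
    obtain ⟨i, hi, rfl⟩ := exists_tuple_succ_eq hx
    rw [htuple _ (by omega)]
    exact tuple_succ_mem (by omega)
  · intro hx
    obtain ⟨i, hi, rfl⟩ := exists_tuple_succ_eq hx
    rw [← htuple _ (by omega)]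
    exact tuple_succ_mem (by omega)

def bigGaps (r t : ℕ) (S : Finset ℕ) : Finset (Fin r) := univ.filter fun i => t ≤ gaps r S i

lemma ncard_bigGaps (r t : ℕ) (S : Finset ℕ) :
    {i | i < r ∧ t ≤ tuple S (i + 1) - tuple S i}.ncard = #(bigGaps r t S) := by
  rw [← Set.ncard_coe_finset, ← Set.ncard_image_of_injective _ Fin.val_injective]
  congr 1
  ext i
  constructor
  · rintro ⟨hi, h⟩
    exact ⟨⟨i, hi⟩, mem_filter.2 ⟨mem_univ _, h⟩, rfl⟩
  · rintro ⟨i, h, rfl⟩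
    exact ⟨i.2, (mem_filter.1 h).2⟩

lemma sum_le_sum_card_mul_of_injOn {ι κ β : Type*} [Fintype κ] [DecidableEq κ] {s : Finset ι}
    {F : ι → ℝ} {f : κ → ℝ} (label : ι → κ) (code : ι → β) (box : κ → Finset β)
    (hF : ∀ i ∈ s, F i ≤ f (label i)) (hf : ∀ t, 0 ≤ f t)
    (hcode : ∀ i ∈ s, code i ∈ box (label i)) (hinj : Set.InjOn code s) :
    ∑ i ∈ s, F i ≤ ∑ t, #(box t) * f t := by
  calc ∑ i ∈ s, F i ≤ ∑ i ∈ s, f (label i) := sum_le_sum hF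
    _ = ∑ t, #{i ∈ s | label i = t} * f t := by
      rw [← sum_fiberwise s label]
      refine sum_congr rfl fun t _ => ?_
      rw [sum_congr rfl fun i hi => by rw [(mem_filter.1 hi).2], sum_const, nsmul_eq_mul]
    _ ≤ ∑ t, #(box t) * f t := by
      gcongr with t
      · exact hf t
      refine card_le_card_of_injOn code (fun i hi => ?_)
        (hinj.mono fun i hi => (mem_filter.1 hi).1)
      obtain ⟨his, rfl⟩ := mem_filter.1 (mem_coe.1 hi)
      exact hcode i his

def box {r : ℕ} (M W : ℕ) (T : Finset (Fin r)) : Finset (Fin r → ℕ) :=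
  Fintype.piFinset fun i => if i ∈ T then Icc 1 M else Icc 1 W

lemma card_box {r : ℕ} (M W : ℕ) (T : Finset (Fin r)) :
    #(box M W T) = M ^ #T * W ^ (r - #T) := by
  simp [box, apply_ite, prod_ite, filter_not, card_univ_sdiff]

noncomputable def gmBound {r : ℕ} (C x L : ℝ) (T : Finset (Fin r)) : ℝ :=
  if T = univ then C * x ^ r else C * x ^ #T / L ^ (100 * r)

section GMBound

variable {r : ℕ} {C x y L L' : ℝ} {T : Finset (Fin r)}

lemma gmBound_nonneg (hC : 0 ≤ C) (hx : 0 ≤ x) (hL : 0 ≤ L) : 0 ≤ gmBound C x L T := by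
  unfold gmBound
  split_ifs <;> positivity

lemma gmBound_le_gmBound (hC : 0 ≤ C) (hx : 0 ≤ x) (hxy : x ≤ y) (hL : 0 < L) (hLL' : L ≤ L') :
    gmBound C x L' T ≤ gmBound C y L T := by
  unfold gmBound
  have hy : 0 ≤ y := hx.trans hxy
  split_ifs
  · gcongr
  · gcongr

lemma pow_le_one_add_pow {m : ℕ} (hx : 0 ≤ x) (hm : m ≤ r) : x ^ m ≤ 1 + x ^ r := by
  rcases le_total x 1 with h | h
  · linarith [pow_le_one₀ (n := m) hx h, pow_nonneg hx r]
  · linarith [pow_le_pow_right₀ h hm]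

lemma sum_card_box_mul_gmBound_le {M W : ℕ} (hC : 0 ≤ C) (hx : 0 ≤ x) (hL : 0 ≤ L) (hW : 1 ≤ W) :
    ∑ T : Finset (Fin r), (#(box M W T) : ℝ) * gmBound C x L T ≤
      C * (M * x) ^ r + 2 ^ r * (C * (1 + (M * x) ^ r) * W ^ r / L ^ (100 * r)) := by
  rw [← add_sum_erase _ _ (mem_univ univ)]
  refine add_le_add (le_of_eq ?_) ?_
  · simp [card_box, gmBound, mul_pow]
    ring
  · have hterm : ∀ T ∈ univ.erase (univ : Finset (Fin r)), (#(box M W T) : ℝ) * gmBound C x L T ≤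
        C * (1 + (M * x) ^ r) * W ^ r / L ^ (100 * r) := by
      intro T hT
      have hTr : #T ≤ r := by simpa using card_le_univ T
      rw [gmBound, if_neg (mem_erase.1 hT).1, card_box]
      calc ((M ^ #T * W ^ (r - #T) : ℕ) : ℝ) * (C * x ^ #T / L ^ (100 * r))
          = C * (M * x) ^ #T * W ^ (r - #T) / L ^ (100 * r) := by push_cast; ring
        _ ≤ C * (1 + (M * x) ^ r) * W ^ r / L ^ (100 * r) := by
          gcongr
          · exact pow_le_one_add_pow (by positivity) hTr
          · exact_mod_cast hW
          · exact Nat.sub_le r #T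
    have hcard : (#(univ.erase (univ : Finset (Fin r))) : ℝ) ≤ 2 ^ r := by
      rw [card_erase_of_mem (mem_univ _), card_univ, Fintype.card_finset, Fintype.card_fin]
      exact_mod_cast Nat.sub_le _ _
    calc _ ≤ ∑ T ∈ univ.erase univ, C * (1 + (M * x) ^ r) * W ^ r / L ^ (100 * r) :=
          sum_le_sum hterm
      _ ≤ _ := by
          rw [sum_const, nsmul_eq_mul]
          gcongr

end GMBound

lemma summable_mul_sq_pow_div_mul_pow {r : ℕ} (A L : ℝ) (hr : 1 ≤ r) :
    Summable fun j : ℕ => (A * j ^ 2) ^ r / (j * L) ^ (100 * r) := by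
  have hsum := (Real.summable_one_div_nat_pow (p := 98 * r)).2 (by omega)
  refine (hsum.mul_left (A ^ r / L ^ (100 * r))).congr fun j => ?_
  rcases eq_or_ne (j : ℝ) 0 with hj | hj
  · simp [hj, zero_pow (show r ≠ 0 by omega), zero_pow (show 98 * r ≠ 0 by omega)]
  · rw [mul_pow, mul_pow, ← pow_mul, show 100 * r = 2 * r + 98 * r by ring, pow_add, pow_mul]
    field_simp
    ring

def level (j : ℕ) (S : Finset ℕ) : ℕ := max (2 ^ j) (S.sup id)

noncomputable def smallGapWidth (C : ℝ) (j : ℕ) : ℕ := ⌈C⌉₊ * (2 * j) ^ 2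

lemma one_le_smallGapWidth {C : ℝ} (hC : 0 < C) {j : ℕ} (hj : 1 ≤ j) : 1 ≤ smallGapWidth C j :=
  Nat.one_le_iff_ne_zero.2 (mul_ne_zero (Nat.ceil_pos.2 hC).ne' (by positivity))

lemma le_smallGapWidth {C : ℝ} {s : ℕ → ℕ} (hs : ∀ n, 2 ≤ n → (s n : ℝ) ≤ C * (Real.log n) ^ 2)
    {j n : ℕ} (hj : 1 ≤ j) (hn : 2 ^ j ≤ n) (hn' : n ≤ 2 ^ (j + 1)) :
    s n ≤ smallGapWidth C j := by
  have h2n : 2 ≤ n := le_trans (by simpa using Nat.pow_le_pow_right two_pos hj) hn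
  have hlog0 : 0 ≤ Real.log n := Real.log_nonneg (by exact_mod_cast one_le_two.trans h2n)
  have hlog : Real.log n ≤ 2 * j := calc
    Real.log n ≤ Real.log ((2 : ℝ) ^ (j + 1)) :=
      Real.log_le_log (by positivity) (by exact_mod_cast hn')
    _ = (j + 1) * Real.log 2 := by rw [Real.log_pow]; push_cast; ring
    _ ≤ (j + 1) * 1 := by gcongr; exact Real.log_two_lt_d9.le.trans (by norm_num)
    _ ≤ 2 * j := by
      have : (1 : ℝ) ≤ j := by exact_mod_cast hj
      linarith
  have : (s n : ℝ) ≤ smallGapWidth C j := calc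
    (s n : ℝ) ≤ C * Real.log n ^ 2 := hs n h2n
    _ ≤ ⌈C⌉₊ * (2 * j) ^ 2 := by gcongr; exact Nat.le_ceil C
    _ = smallGapWidth C j := by simp [smallGapWidth]
  exact_mod_cast this

lemma gaps_mem_box {r M W t : ℕ} {S : Finset ℕ} (hSM : S ⊆ Icc 1 M) (hS : #S = r) (ht : t ≤ W) :
    gaps r S ∈ box M W (bigGaps r t S) := by
  rw [box, Fintype.mem_piFinset]
  intro i
  have hlt := tuple_lt_tuple_succ (fun x hx => (mem_Icc.1 (hSM hx)).1) (hS ▸ i.2 : (i : ℕ) < #S)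
  have hle := (mem_Icc.1 (hSM (tuple_succ_mem (hS ▸ i.2 : (i : ℕ) < #S)))).2
  split_ifs with hi
  · exact mem_Icc.2 ⟨by simp only [gaps]; omega, (Nat.sub_le _ _).trans hle⟩
  · have hsmall : gaps r S i < t := by simpa [bigGaps] using hi
    exact mem_Icc.2 ⟨by simp only [gaps]; omega, by omega⟩

section Events

variable {Ω : Type*} {E : ℕ → ℕ → Set Ω} {r : ℕ}

def scaleEvent (E : ℕ → ℕ → Set Ω) (r j : ℕ) : Set Ω :=
  ⋃ S ∈ (Icc 1 (2 ^ (j + 1))).powersetCard r, ⋂ k ∈ S, E (level j S) k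

lemma subset_limsup_scaleEvent (hEmono : ∀ k n₁ n₂, n₂ ≤ n₁ → E n₁ k ⊆ E n₂ k) :
    (⋂ m, ⋃ n, ⋃ (_ : m ≤ n), {ω | r ≤ Set.ncard {k | 1 ≤ k ∧ k ≤ n ∧ ω ∈ E n k}}) ⊆
      limsup (scaleEvent E r) atTop := by
  intro ω hω
  rw [mem_limsup_iff_frequently_mem, frequently_atTop]
  intro J
  obtain ⟨n, hJn, hn⟩ : ∃ n, 2 ^ J ≤ n ∧ r ≤ Set.ncard {k | 1 ≤ k ∧ k ≤ n ∧ ω ∈ E n k} := by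
    simpa using Set.mem_iInter.1 hω (2 ^ J)
  have hn0 : n ≠ 0 := Nat.one_le_iff_ne_zero.1 (Nat.one_le_two_pow.trans hJn)
  have hfin : {k | 1 ≤ k ∧ k ≤ n ∧ ω ∈ E n k}.Finite :=
    (Set.finite_Icc 1 n).subset fun k hk => ⟨hk.1, hk.2.1⟩
  rw [Set.ncard_eq_toFinset_card _ hfin] at hn
  obtain ⟨S, hSsub, hS⟩ := exists_subset_card_eq hn
  have hmem : ∀ k ∈ S, 1 ≤ k ∧ k ≤ n ∧ ω ∈ E n k := fun k hk => hfin.mem_toFinset.1 (hSsub hk)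
  refine ⟨Nat.log 2 n, (Nat.le_log_iff_pow_le one_lt_two hn0).2 hJn,
    Set.mem_biUnion (x := S) ?_ ?_⟩
  · refine mem_powersetCard.2 ⟨fun k hk => mem_Icc.2 ⟨(hmem k hk).1, ?_⟩, hS⟩
    exact (hmem k hk).2.1.trans (Nat.lt_pow_succ_log_self one_lt_two n).le
  · refine Set.mem_iInter₂.2 fun k hk => hEmono k n _ ?_ (hmem k hk).2.2
    exact max_le (Nat.pow_log_le_self 2 hn0) (Finset.sup_le fun k hk => (hmem k hk).2.1)

end Events

section Measure

variable {Ω : Type*} [MeasurableSpace Ω] {μ : Measure Ω} {E : ℕ → ℕ → Set Ω} {r : ℕ} {C : ℝ}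
  {σ : ℕ → ℝ} {s : ℕ → ℕ}

lemma measureReal_biInter_le_gmBound
    (hGM1 : ∀ n, ∀ k : ℕ → ℕ, k 0 = 0 → (∀ j < r, k j < k (j + 1)) → k r ≤ n →
      (∀ j < r, s n ≤ k (j + 1) - k j) →
        (μ (⋂ j ∈ Finset.Icc 1 r, E n (k j))).toReal ≤ C * σ n ^ r)
    (hGM2 : ∀ n, ∀ k : ℕ → ℕ, k 0 = 0 → (∀ j < r, k j < k (j + 1)) → k r ≤ n →
      ∀ m < r, Set.ncard {j | j < r ∧ s n ≤ k (j + 1) - k j} = m →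
      (μ (⋂ j ∈ Finset.Icc 1 r, E n (k j))).toReal ≤
        C * σ n ^ m / (Real.log n) ^ (100 * r))
    {n : ℕ} {S : Finset ℕ} (hS : #S = r) (hpos : ∀ x ∈ S, 0 < x) (hSn : S.sup id ≤ n) :
    μ.real (⋂ k ∈ S, E n k) ≤ gmBound C (σ n) (Real.log n) (bigGaps r (s n) S) := by
  subst hS
  have hincr : ∀ j < #S, tuple S j < tuple S (j + 1) := fun j hj => tuple_lt_tuple_succ hpos hj
  have hkn : tuple S #S ≤ n := (tuple_le_sup le_rfl).trans hSn
  rw [← biInter_tuple (E n), gmBound]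
  split_ifs with hT
  · refine hGM1 n (tuple S) (tuple_zero S) hincr hkn fun j hj => ?_
    have hmem : (⟨j, hj⟩ : Fin #S) ∈ bigGaps #S (s n) S := hT ▸ mem_univ _
    exact (mem_filter.1 hmem).2
  · have hcard : #(bigGaps #S (s n) S) < #S := by
      simpa using (card_lt_iff_ne_univ _).2 hT
    exact hGM2 n (tuple S) (tuple_zero S) hincr hkn _ hcard (ncard_bigGaps _ _ _)

noncomputable def scaleBound (C : ℝ) (σ : ℕ → ℝ) (r j : ℕ) : ℝ :=
  C * (2 ^ (j + 1) * σ (2 ^ j)) ^ r +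
    2 ^ r * (C * (1 + (2 ^ (j + 1) * σ (2 ^ j)) ^ r) * smallGapWidth C j ^ r /
      (j * Real.log 2) ^ (100 * r))

lemma measureReal_scaleEvent_le
    (hGM1 : ∀ n, ∀ k : ℕ → ℕ, k 0 = 0 → (∀ j < r, k j < k (j + 1)) → k r ≤ n →
      (∀ j < r, s n ≤ k (j + 1) - k j) →
        (μ (⋂ j ∈ Finset.Icc 1 r, E n (k j))).toReal ≤ C * σ n ^ r)
    (hGM2 : ∀ n, ∀ k : ℕ → ℕ, k 0 = 0 → (∀ j < r, k j < k (j + 1)) → k r ≤ n →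
      ∀ m < r, Set.ncard {j | j < r ∧ s n ≤ k (j + 1) - k j} = m →
      (μ (⋂ j ∈ Finset.Icc 1 r, E n (k j))).toReal ≤
        C * σ n ^ m / (Real.log n) ^ (100 * r))
    (hC : 0 ≤ C) (hσ : ∀ n, 0 ≤ σ n) (hσmono : ∀ n₁ n₂, n₂ ≤ n₁ → σ n₁ ≤ σ n₂)
    (hs : ∀ n, 2 ≤ n → (s n : ℝ) ≤ C * (Real.log n) ^ 2) {j : ℕ} (hj : 1 ≤ j) :
    μ.real (scaleEvent E r j) ≤
      ∑ T : Finset (Fin r),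
        (#(box (2 ^ (j + 1)) (smallGapWidth C j) T) : ℝ) *
          gmBound C (σ (2 ^ j)) (j * Real.log 2) T := by
  refine (measureReal_biUnion_finset_le _ _).trans <|
    sum_le_sum_card_mul_of_injOn (fun S => bigGaps r (s (level j S)) S) (gaps r) _
      (fun S hS => ?_) (fun T => gmBound_nonneg hC (hσ _) (by positivity))
      (fun S hS => ?_) (gaps_injOn.mono fun S hS => ?_)
  all_goals obtain ⟨hSM, hS⟩ := mem_powersetCard.1 hS
  · have hpos : ∀ x ∈ S, 0 < x := fun x hx => (mem_Icc.1 (hSM hx)).1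
    have hlog : (j : ℝ) * Real.log 2 ≤ Real.log (level j S) := by
      rw [← Real.log_pow]
      exact Real.log_le_log (by positivity) (by exact_mod_cast le_max_left _ _)
    exact (measureReal_biInter_le_gmBound hGM1 hGM2 hS hpos (le_max_right _ _)).trans <|
      gmBound_le_gmBound hC (hσ _) (hσmono _ _ (le_max_left _ _))
        (mul_pos (by exact_mod_cast hj) (Real.log_pos one_lt_two)) hlog
  · refine gaps_mem_box hSM hS (le_smallGapWidth hs hj (le_max_left _ _) ?_)
    exact max_le (Nat.pow_le_pow_right two_pos j.le_succ)
      (Finset.sup_le fun x hx => (mem_Icc.1 (hSM hx)).2)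
  · exact ⟨hS, fun x hx => (mem_Icc.1 (hSM hx)).1⟩

lemma summable_scaleBound (hr : 1 ≤ r) (hC : 0 ≤ C) (hσ : ∀ n, 0 ≤ σ n)
    (hsum : Summable fun j : ℕ => (2 : ℝ) ^ (r * j) * σ (2 ^ j) ^ r) :
    Summable (scaleBound C σ r) := by
  set a : ℕ → ℝ := fun j => (2 : ℝ) ^ (r * j) * σ (2 ^ j) ^ r
  have ha : ∀ j, 0 ≤ a j := fun j => mul_nonneg (by positivity) (pow_nonneg (hσ _) _)
  have hpow : ∀ j, ((2 : ℝ) ^ (j + 1) * σ (2 ^ j)) ^ r = 2 ^ r * a j := fun j => by ring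
  have hW : ∀ j, (smallGapWidth C j : ℝ) = 4 * ⌈C⌉₊ * j ^ 2 := fun j => by
    simp only [smallGapWidth]; push_cast; ring
  set K := ∑' j, a j
  have hK : ∀ j, a j ≤ K := fun j => hsum.le_tsum j fun i _ => ha i
  unfold scaleBound
  simp only [hpow, hW]
  refine Summable.add ((hsum.mul_left (C * 2 ^ r)).congr fun j => by ring) ?_
  refine Summable.of_nonneg_of_le (fun j => ?_) (fun j => ?_)
    ((summable_mul_sq_pow_div_mul_pow (4 * ⌈C⌉₊) (Real.log 2) hr).mul_left
      (2 ^ r * (C * (1 + 2 ^ r * K))))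
  · have := ha j
    positivity
  · calc _ = 2 ^ r * (C * (1 + 2 ^ r * a j)) *
          ((4 * ⌈C⌉₊ * (j : ℝ) ^ 2) ^ r / (j * Real.log 2) ^ (100 * r)) := by ring
      _ ≤ _ := by gcongr; exact hK j

lemma tsum_measure_ne_top_of_summable [IsFiniteMeasure μ] {B : ℕ → Set Ω}
    (h : Summable fun j => μ.real (B j)) : ∑' j, μ (B j) ≠ ∞ := by
  rw [show (fun j => μ (B j)) = fun j => ENNReal.ofReal (μ.real (B j)) from
    funext fun j => (ofReal_measureReal).symm, ← ENNReal.ofReal_tsum_of_nonneg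
      (fun _ => measureReal_nonneg) h]
  exact ENNReal.ofReal_ne_top

end Measure

end MultipleBorelCantelli

open MultipleBorelCantelli

theorem stmt2_general {Ω : Type*} [MeasurableSpace Ω] (μ : Measure Ω) [IsProbabilityMeasure μ]
    (E : ℕ → ℕ → Set Ω)
    (hEmono : ∀ k n₁ n₂, n₂ ≤ n₁ → E n₁ k ⊆ E n₂ k)
    (r : ℕ) (hr : 1 ≤ r)
    (C : ℝ) (hC : 0 < C)
    (σ : ℕ → ℝ) (hσnonneg : ∀ n, 0 ≤ σ n)
    (hσmono : ∀ n₁ n₂, n₂ ≤ n₁ → σ n₁ ≤ σ n₂)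
    (s : ℕ → ℕ) (hs : ∀ n, 2 ≤ n → (s n : ℝ) ≤ C * (Real.log n) ^ 2)
    -- (GM1)_r : well-separated tuples
    (hGM1 : ∀ n, ∀ k : ℕ → ℕ, k 0 = 0 → (∀ j < r, k j < k (j + 1)) → k r ≤ n →
      (∀ j < r, s n ≤ k (j + 1) - k j) →
      C⁻¹ * σ n ^ r ≤ (μ (⋂ j ∈ Finset.Icc 1 r, E n (k j))).toReal ∧
        (μ (⋂ j ∈ Finset.Icc 1 r, E n (k j))).toReal ≤ C * σ n ^ r)
    -- (GM2)_r : tuples with only m < r large gaps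
    (hGM2 : ∀ n, ∀ k : ℕ → ℕ, k 0 = 0 → (∀ j < r, k j < k (j + 1)) → k r ≤ n →
      ∀ m < r, Set.ncard {j | j < r ∧ s n ≤ k (j + 1) - k j} = m →
      (μ (⋂ j ∈ Finset.Icc 1 r, E n (k j))).toReal ≤
        C * σ n ^ m / (Real.log n) ^ (100 * r))
    (hsum : Summable (fun j : ℕ => (2 : ℝ) ^ (r * j) * σ (2 ^ j) ^ r)) :
    μ (⋂ m, ⋃ n, ⋃ (_ : m ≤ n),
        {ω | r ≤ Set.ncard {k | 1 ≤ k ∧ k ≤ n ∧ ω ∈ E n k}}) = 0 := by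
  have hscale : ∀ᶠ j in atTop, ‖μ.real (scaleEvent E r j)‖ ≤ scaleBound C σ r j := by
    filter_upwards [eventually_ge_atTop 1] with j hj
    rw [Real.norm_of_nonneg measureReal_nonneg]
    refine (measureReal_scaleEvent_le (fun n k h₀ h₁ h₂ h₃ => (hGM1 n k h₀ h₁ h₂ h₃).2) hGM2
      hC.le hσnonneg hσmono hs hj).trans ?_
    simpa [scaleBound] using sum_card_box_mul_gmBound_le (M := 2 ^ (j + 1)) hC.le
      (hσnonneg (2 ^ j)) (by positivity) (one_le_smallGapWidth hC hj)
  have hsummable :=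
    (summable_scaleBound hr hC.le hσnonneg hsum).of_norm_bounded_eventually_nat hscale
  exact measure_mono_null (subset_limsup_scaleEvent hEmono)
    (measure_limsup_atTop_eq_zero (tsum_measure_ne_top_of_summable hsummable))

/-- Convergent half of the generalized multiple Borel–Cantelli Lemma. -/
theorem stmt2 {Ω : Type*} [MeasurableSpace Ω] (μ : Measure Ω) [IsProbabilityMeasure μ]
    (E : ℕ → ℕ → Set Ω) (hmeas : ∀ n k, MeasurableSet (E n k))
    (hEmono : ∀ k n₁ n₂, n₂ ≤ n₁ → E n₁ k ⊆ E n₂ k)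
    (r : ℕ) (hr : 1 ≤ r)
    (C : ℝ) (hC : 0 < C)
    (σ : ℕ → ℝ) (hσnonneg : ∀ n, 0 ≤ σ n)
    (hσmono : ∀ n₁ n₂, n₂ ≤ n₁ → σ n₁ ≤ σ n₂)
    (s : ℕ → ℕ) (hs : ∀ n, 2 ≤ n → (s n : ℝ) ≤ C * (Real.log n) ^ 2)
    -- (GM1)_r : well-separated tuples
    (hGM1 : ∀ n, ∀ k : ℕ → ℕ, k 0 = 0 → (∀ j < r, k j < k (j + 1)) → k r ≤ n →
      (∀ j < r, s n ≤ k (j + 1) - k j) →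
      C⁻¹ * σ n ^ r ≤ (μ (⋂ j ∈ Finset.Icc 1 r, E n (k j))).toReal ∧
        (μ (⋂ j ∈ Finset.Icc 1 r, E n (k j))).toReal ≤ C * σ n ^ r)
    -- (GM2)_r : tuples with only m < r large gaps
    (hGM2 : ∀ n, ∀ k : ℕ → ℕ, k 0 = 0 → (∀ j < r, k j < k (j + 1)) → k r ≤ n →
      ∀ m < r, Set.ncard {j | j < r ∧ s n ≤ k (j + 1) - k j} = m →
      (μ (⋂ j ∈ Finset.Icc 1 r, E n (k j))).toReal ≤
        C * σ n ^ m / (Real.log n) ^ (100 * r))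
    (hsum : Summable (fun j : ℕ => (2 : ℝ) ^ (r * j) * σ (2 ^ j) ^ r)) :
    μ (⋂ m, ⋃ n, ⋃ (_ : m ≤ n),
        {ω | r ≤ Set.ncard {k | 1 ≤ k ∧ k ≤ n ∧ ω ∈ E n k}}) = 0 :=
  stmt2_general μ E hEmono r hr C hC σ hσnonneg hσmono s hs hGM1 hGM2 hsum
end

section
/- Let T : [0,1] → [0,1] be a piecewise expanding map with partition Δ = {Δ_i}, satisfying: (a) bounded distortion (|(T^n)'(y)/(T^n)'(z)| ≤ e^C on cylinders), (b) for a fixed x there exist χ₀, Λ₁ > 0 with d(T^n x, ∂Δ) > e^{-χ₀ n} and |(T^n)'(x)| ≤ e^{nΛ₁} for all n ∈ ℤ₊. Set β = C + χ₀ + Λ₁. Then for every n ∈ ℤ₊, the ball B(x, e^{-βn}) is contained in the cylinder Δ^n(x) of the dynamical partition ⋁_{j=0}^{n-1} T^{-j}Δ containing x. -/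
open Metric

/-- Balls are contained in dynamical cylinders: under bounded distortion, the
boundary-avoidance bound `d(Tⁿx, ∂Δ) > e^{-χ₀n}` and the derivative growth bound
`|(Tⁿ)'(x)| ≤ e^{nΛ₁}`, with `β = C + χ₀ + Λ₁` the ball `B(x, e^{-βn})` lies in the
`n`-cylinder `Δⁿ(x)` of the partition `Δ` containing `x`. -/
theorem stmt10 (T T' : ℝ → ℝ) (Δ : ℕ → Set ℝ) (S : Set ℝ)
    (C χ₀ Λ₁ : ℝ) (hC : 0 ≤ C) (hχ₀ : 0 < χ₀) (hΛ₁ : 0 < Λ₁)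
    (x : ℝ)
    -- bounded distortion along common cylinders (chain rule form of `|(Tᵏ)'|`)
    (hdistort : ∀ (k : ℕ) (y z : ℝ), (∀ j < k, ∃ i, T^[j] y ∈ Δ i ∧ T^[j] z ∈ Δ i) →
      dist (T^[k] y) (T^[k] z) ≤
        Real.exp C * |∏ j ∈ Finset.range k, T' (T^[j] y)| * dist y z)
    -- `S = ∂Δ` separates the partition elements
    (hsep : ∀ y z : ℝ, dist y z < infDist y S → ∃ i, y ∈ Δ i ∧ z ∈ Δ i)
    -- boundary avoidance: `d(Tⁿ x, ∂Δ) > e^{-χ₀ n}`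
    (hbd : ∀ n : ℕ, Real.exp (-χ₀ * n) < infDist (T^[n] x) S)
    -- derivative growth: `|(Tⁿ)'(x)| ≤ e^{n Λ₁}`
    (hgrowth : ∀ n : ℕ, |∏ j ∈ Finset.range n, T' (T^[j] x)| ≤ Real.exp (Λ₁ * n)) :
    ∀ n : ℕ, ball x (Real.exp (-(C + χ₀ + Λ₁) * n)) ⊆
      {y | ∀ j < n, ∃ i, T^[j] x ∈ Δ i ∧ T^[j] y ∈ Δ i} := by

  intro n y hy
  have hxy : dist x y < Real.exp (-(C + χ₀ + Λ₁) * n) := by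
    rw [dist_comm]; exact mem_ball.mp hy
  intro j
  induction j using Nat.strong_induction_on with
  | _ j ih =>
    intro hj
    have hd := hdistort j x y (fun k hk => ih k hk (hk.trans hj))
    have h1 : dist (T^[j] x) (T^[j] y) ≤
        Real.exp C * Real.exp (Λ₁ * j) * Real.exp (-(C + χ₀ + Λ₁) * n) := by
      calc dist (T^[j] x) (T^[j] y)
          ≤ Real.exp C * |∏ k ∈ Finset.range j, T' (T^[k] x)| * dist x y := hd
        _ ≤ Real.exp C * Real.exp (Λ₁ * j) * Real.exp (-(C + χ₀ + Λ₁) * n) := by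
            apply mul_le_mul
            · exact mul_le_mul_of_nonneg_left (hgrowth j) (Real.exp_pos C).le
            · exact hxy.le
            · exact dist_nonneg
            · positivity
    have h2 : Real.exp C * Real.exp (Λ₁ * j) * Real.exp (-(C + χ₀ + Λ₁) * n) ≤
        Real.exp (-χ₀ * j) := by
      rw [← Real.exp_add, ← Real.exp_add, Real.exp_le_exp]
      have hjn : (j : ℝ) + 1 ≤ n := by exact_mod_cast hj
      nlinarith [hχ₀.le, hΛ₁.le, hC]
    exact hsep _ _ (lt_of_le_of_lt (h1.trans h2) (hbd j))
end

section
/- Let T : I → I be a map and μ a T-invariant measure on I, with d(x, T^k x) ≤ ρ for some x and k ≥ 1. Suppose x ∈ 𝓘_{n,l} := ⋂_{j=1}^l T^{-j}{y : |T'(y)| ≤ n} with l ≥ Lk. Then d(x, T^{Lk} x) ≤ Σ_{j=1}^L d(T^{(j-1)k} x, T^{jk} x) ≤ L n^{(L-1)k} ρ. In particular, if μ({|T'| > t}) < t^{-τ} for large t, then μ(𝓘_{n,l}^c) ≤ l n^{-τ}, and combining these with the large-iterate recurrence bound yields: for each A > 0 there is ρ₀ such that for all ρ < ρ₀ and all k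 ∈ ℤ₊, μ({x : d(x, T^k x) < ρ}) ≤ C|ln ρ|^{-A}. -/
open MeasureTheory Metric Filter

private lemma rpow_base_anti {a b c : ℝ} (ha : 0 < a) (hab : a ≤ b) (hc : c ≤ 0) :
    b ^ c ≤ a ^ c := by
  have hb : 0 < b := lt_of_lt_of_le ha hab
  rw [← neg_neg c, Real.rpow_neg ha.le, Real.rpow_neg hb.le]
  have h1 : (0:ℝ) < a ^ (-c) := Real.rpow_pos_of_pos ha _
  have h2 : a ^ (-c) ≤ b ^ (-c) := Real.rpow_le_rpow ha.le hab (by linarith)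
  exact inv_anti₀ h1 h2

private lemma aux_chain {X : Type*} [MetricSpace X] (T : X → X) (T' : X → ℝ)
    (hLip : ∀ (y z : X) (n : ℕ), |T' y| ≤ (n : ℝ) → dist (T y) (T z) ≤ (n : ℝ) * dist y z)
    (x : X) (n k : ℕ) :
    ∀ m : ℕ, (∀ j, k ≤ j → j < m + k → |T' (T^[j] x)| ≤ (n : ℝ)) →
      dist (T^[m] x) (T^[m + k] x) ≤ (n : ℝ) ^ m * dist x (T^[k] x) := by
  intro m
  induction m with
  | zero => intro _; simp
  | succ m ih =>
    intro h
    have h1 : |T' (T^[m + k] x)| ≤ (n : ℝ) := h (m + k) (Nat.le_add_left _ _) (by omega)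
    have h2 : dist (T^[m] x) (T^[m + k] x) ≤ (n : ℝ) ^ m * dist x (T^[k] x) :=
      ih fun j hj hj' => h j hj (by omega)
    have h3 : dist (T^[m + 1] x) (T^[m + 1 + k] x) ≤ (n : ℝ) * dist (T^[m + k] x) (T^[m] x) := by
      have e1 : T^[m + 1] x = T (T^[m] x) := Function.iterate_succ_apply' T m x
      have e2 : T^[m + 1 + k] x = T (T^[m + k] x) := by
        rw [show m + 1 + k = (m + k) + 1 by omega]
        exact Function.iterate_succ_apply' T (m + k) x
      rw [e1, e2, dist_comm]
      exact hLip _ _ n h1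
    rw [dist_comm (T^[m + k] x) (T^[m] x)] at h3
    calc dist (T^[m + 1] x) (T^[m + 1 + k] x)
        ≤ (n : ℝ) * dist (T^[m] x) (T^[m + k] x) := h3
      _ ≤ (n : ℝ) * ((n : ℝ) ^ m * dist x (T^[k] x)) :=
          mul_le_mul_of_nonneg_left h2 (by positivity)
      _ = (n : ℝ) ^ (m + 1) * dist x (T^[k] x) := by ring

set_option maxHeartbeats 1600000 in
/-- Slow recurrence for piecewise expanding maps: chaining short recurrence along points with
controlled derivative (`𝓘_{n,l} = ⋂_{j=1}^l T^{-j}{|T'| ≤ n}`), the tail bound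
`μ(𝓘_{n,l}ᶜ) ≤ l n^{-τ}` from `μ({|T'| > t}) < t^{-τ}`, and the large-iterate estimate
combine to give `μ({x : d(x, Tᵏx) < ρ}) ≤ C |ln ρ|^{-A}` for all `k ≥ 1`. -/
theorem stmt13 {X : Type*} [MetricSpace X] [MeasurableSpace X] [BorelSpace X]
    (μ : Measure X) [IsProbabilityMeasure μ]
    (T : X → X) (hT : MeasurePreserving T μ μ)
    (T' : X → ℝ) (hT'meas : Measurable T')
    (τ : ℝ) (hτ : 0 < τ)
    -- `|T'(y)| ≤ n` makes `T` `n`-Lipschitz at `y` (mean-value/chain-rule idealization)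
    (hLip : ∀ (y z : X) (n : ℕ), |T' y| ≤ (n : ℝ) → dist (T y) (T z) ≤ (n : ℝ) * dist y z)
    -- tail bound on the derivative
    (t₀ : ℝ) (htail : ∀ t : ℝ, t₀ ≤ t → (μ {x | t < |T' x|}).toReal < t ^ (-τ))
    -- the large-iterate slow-recurrence estimate (previous statement)
    (hlarge : ∀ A : ℝ, 0 < A → ∃ ρ₀ > (0 : ℝ), ∀ ρ : ℝ, 0 < ρ → ρ < ρ₀ →
      ∀ k : ℕ, A ^ 2 * Real.log |Real.log ρ| ≤ (k : ℝ) →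
        (μ {x | dist x (T^[k] x) < ρ}).toReal ≤ |Real.log ρ| ^ (-(2 * A))) :
    -- (1) deterministic chaining bound
    (∀ (x : X) (ρ : ℝ) (n k L l : ℕ), 1 ≤ k → dist x (T^[k] x) ≤ ρ →
      x ∈ ⋂ j ∈ Finset.Icc 1 l, T^[j] ⁻¹' {y | |T' y| ≤ (n : ℝ)} → L * k ≤ l →
      dist x (T^[L * k] x) ≤ (L : ℝ) * (n : ℝ) ^ ((L - 1) * k) * ρ) ∧
    -- (2) measure of the complement of `𝓘_{n,l}`
    (∀ n l : ℕ, t₀ ≤ (n : ℝ) →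
      (μ (⋂ j ∈ Finset.Icc 1 l, T^[j] ⁻¹' {y | |T' y| ≤ (n : ℝ)})ᶜ).toReal ≤
        (l : ℝ) * (n : ℝ) ^ (-τ)) ∧
    -- (3) full slow-recurrence estimate
    (∀ A : ℝ, 0 < A → ∃ Cf > (0 : ℝ), ∃ ρ₀ > (0 : ℝ), ∀ ρ : ℝ, 0 < ρ → ρ < ρ₀ →
      ∀ k : ℕ, 1 ≤ k →
        (μ {x | dist x (T^[k] x) < ρ}).toReal ≤ Cf * |Real.log ρ| ^ (-A)) := by
  -- unfold membership in `𝓘_{n,l}`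
  have hmem : ∀ (x : X) (l n : ℕ),
      x ∈ ⋂ j ∈ Finset.Icc 1 l, T^[j] ⁻¹' {y | |T' y| ≤ (n : ℝ)} →
      ∀ j, 1 ≤ j → j ≤ l → |T' (T^[j] x)| ≤ (n : ℝ) := by
    intro x l n hx j hj1 hjl
    exact Set.mem_iInter₂.mp hx j (Finset.mem_Icc.mpr ⟨hj1, hjl⟩)
  -- `T` cannot be constant (this uses `hlarge`)
  have hconst : ∀ c : X, (∀ z, T z = c) → False := by
    intro c hc
    obtain ⟨ρ₁, hρ₁, H⟩ := hlarge 1 one_pos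
    set ρ₂ := min (ρ₁ / 2) (Real.exp (-2)) with hρ₂def
    have hρ₂pos : 0 < ρ₂ := lt_min (by linarith) (Real.exp_pos _)
    have hρ₂lt : ρ₂ < ρ₁ := lt_of_le_of_lt (min_le_left _ _) (by linarith)
    set k₀ := ⌈Real.log |Real.log ρ₂|⌉₊ + 1 with hk₀def
    have hcond : (1:ℝ) ^ 2 * Real.log |Real.log ρ₂| ≤ (k₀ : ℝ) := by
      rw [one_pow, one_mul]
      calc Real.log |Real.log ρ₂| ≤ (⌈Real.log |Real.log ρ₂|⌉₊ : ℝ) := Nat.le_ceil _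
        _ ≤ (k₀ : ℝ) := by exact_mod_cast Nat.le_succ _
    have hbound := H ρ₂ hρ₂pos hρ₂lt k₀ hcond
    have hiterc : T^[k₀] c = c := Function.iterate_fixed (hc c) k₀
    have hμc : μ {c} = 1 := by
      have h1 : T ⁻¹' {c} = Set.univ := by ext z; simp [hc z]
      have h2 := hT.measure_preimage (measurableSet_singleton c).nullMeasurableSet
      rw [h1] at h2
      simpa using h2.symm
    have hsub : {c} ⊆ {x | dist x (T^[k₀] x) < ρ₂} :=
      Set.singleton_subset_iff.mpr (by
        show dist c (T^[k₀] c) < ρ₂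
        rw [hiterc, dist_self]; exact hρ₂pos)
    have h1le : (1:ℝ) ≤ (μ {x | dist x (T^[k₀] x) < ρ₂}).toReal := by
      have hmono := measure_mono (μ := μ) hsub
      rw [hμc] at hmono
      have hne : μ {x | dist x (T^[k₀] x) < ρ₂} ≠ ⊤ := measure_ne_top μ _
      calc (1:ℝ) = (1 : ENNReal).toReal := by simp
        _ ≤ _ := ENNReal.toReal_mono hne hmono
    have hρ₂e : ρ₂ ≤ Real.exp (-2) := min_le_right _ _
    have hlogρ₂ : Real.log ρ₂ ≤ -2 := by
      calc Real.log ρ₂ ≤ Real.log (Real.exp (-2)) := Real.log_le_log hρ₂pos hρ₂e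
        _ = -2 := Real.log_exp _
    have habs2 : (2:ℝ) ≤ |Real.log ρ₂| := by
      rw [abs_of_nonpos (by linarith)]; linarith
    have hsmall : |Real.log ρ₂| ^ (-(2 * (1:ℝ))) ≤ (2:ℝ) ^ (-(2 * (1:ℝ))) :=
      rpow_base_anti two_pos habs2 (by norm_num)
    have h2v : (2:ℝ) ^ (-(2 * (1:ℝ))) = 1/4 := by
      rw [show (-(2 * (1:ℝ))) = ((-2 : ℤ) : ℝ) by norm_num, Real.rpow_intCast]
      norm_num
    rw [h2v] at hsmall
    linarith [le_trans h1le (le_trans hbound hsmall)]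
  -- Part (1)
  have part1 : ∀ (x : X) (ρ : ℝ) (n k L l : ℕ), 1 ≤ k → dist x (T^[k] x) ≤ ρ →
      x ∈ ⋂ j ∈ Finset.Icc 1 l, T^[j] ⁻¹' {y | |T' y| ≤ (n : ℝ)} → L * k ≤ l →
      dist x (T^[L * k] x) ≤ (L : ℝ) * (n : ℝ) ^ ((L - 1) * k) * ρ := by
    intro x ρ n k L l hk hd hx hLl
    have hρ0 : 0 ≤ ρ := le_trans dist_nonneg hd
    rcases Nat.eq_zero_or_pos n with hn0 | hn1
    · subst hn0
      match L, hLl with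
      | 0, _ => simp
      | 1, _ => simpa using hd
      | (L' + 2), hLl =>
        exfalso
        have h1l : 1 ≤ l := le_trans (Nat.mul_pos (by omega) hk : 0 < (L' + 2) * k) hLl
        have hT0 : |T' (T^[1] x)| ≤ ((0:ℕ) : ℝ) := hmem x l 0 hx 1 le_rfl h1l
        apply hconst (T (T x))
        intro z
        have hd0 := hLip (T^[1] x) z 0 hT0
        simp only [Nat.cast_zero, zero_mul, Function.iterate_one] at hd0
        have := le_antisymm hd0 dist_nonneg
        rw [dist_eq_zero] at this
        exact this.symm
    · have hn1' : (1:ℝ) ≤ (n:ℝ) := by exact_mod_cast hn1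
      have key : ∀ i, i < L →
          dist (T^[i*k] x) (T^[(i+1)*k] x) ≤ (n:ℝ) ^ ((L-1)*k) * ρ := by
        intro i hi
        have hm : (i+1)*k = i*k + k := by ring
        have hcond : ∀ j, k ≤ j → j < i*k + k → |T' (T^[j] x)| ≤ (n:ℝ) := by
          intro j hj hj'
          have h1 : (i+1)*k ≤ L*k := Nat.mul_le_mul_right k (by omega)
          have h2 : i*k + k ≤ l := by
            calc i*k + k = (i+1)*k := by ring
              _ ≤ L*k := h1
              _ ≤ l := hLl
          exact hmem x l n hx j (le_trans hk hj) (by omega)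
        have hchain := aux_chain T T' hLip x n k (i*k) hcond
        calc dist (T^[i*k] x) (T^[(i+1)*k] x) = dist (T^[i*k] x) (T^[i*k + k] x) := by rw [hm]
          _ ≤ (n:ℝ)^(i*k) * dist x (T^[k] x) := hchain
          _ ≤ (n:ℝ)^((L-1)*k) * ρ := by
              apply mul_le_mul (pow_le_pow_right₀ hn1' (Nat.mul_le_mul_right k (by omega)))
                hd dist_nonneg (by positivity)
      calc dist x (T^[L*k] x) = dist (T^[0*k] x) (T^[L*k] x) := by norm_num
        _ ≤ ∑ i ∈ Finset.range L, dist (T^[i*k] x) (T^[(i+1)*k] x) :=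
            dist_le_range_sum_dist (fun j => T^[j*k] x) L
        _ ≤ ∑ i ∈ Finset.range L, (n:ℝ)^((L-1)*k) * ρ :=
            Finset.sum_le_sum fun i hi => key i (Finset.mem_range.mp hi)
        _ = (L:ℝ) * ((n:ℝ)^((L-1)*k) * ρ) := by
            rw [Finset.sum_const, Finset.card_range, nsmul_eq_mul]
        _ = (L:ℝ) * (n:ℝ)^((L-1)*k) * ρ := by ring
  -- Part (2)
  have part2 : ∀ n l : ℕ, t₀ ≤ (n : ℝ) →
      (μ (⋂ j ∈ Finset.Icc 1 l, T^[j] ⁻¹' {y | |T' y| ≤ (n : ℝ)})ᶜ).toReal ≤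
        (l : ℝ) * (n : ℝ) ^ (-τ) := by
    intro n l hn
    have hSmeas : MeasurableSet {y : X | (n:ℝ) < |T' y|} :=
      measurableSet_lt measurable_const hT'meas.abs
    have hcompl : (⋂ j ∈ Finset.Icc 1 l, T^[j] ⁻¹' {y | |T' y| ≤ (n : ℝ)})ᶜ
        = ⋃ j ∈ Finset.Icc 1 l, T^[j] ⁻¹' {y | (n:ℝ) < |T' y|} := by
      ext z
      simp [not_le]
    have hpre : ∀ j : ℕ, μ (T^[j] ⁻¹' {y | (n:ℝ) < |T' y|}) = μ {y | (n:ℝ) < |T' y|} :=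
      fun j => (hT.iterate j).measure_preimage hSmeas.nullMeasurableSet
    have hsum : μ ((⋂ j ∈ Finset.Icc 1 l, T^[j] ⁻¹' {y | |T' y| ≤ (n : ℝ)})ᶜ)
        ≤ l • μ {y | (n:ℝ) < |T' y|} := by
      rw [hcompl]
      calc μ (⋃ j ∈ Finset.Icc 1 l, T^[j] ⁻¹' {y | (n:ℝ) < |T' y|})
          ≤ ∑ j ∈ Finset.Icc 1 l, μ (T^[j] ⁻¹' {y | (n:ℝ) < |T' y|}) :=
            measure_biUnion_finset_le _ _
        _ = ∑ _j ∈ Finset.Icc 1 l, μ {y | (n:ℝ) < |T' y|} :=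
            Finset.sum_congr rfl fun j _ => hpre j
        _ = (Finset.Icc 1 l).card • μ {y | (n:ℝ) < |T' y|} := Finset.sum_const _
        _ = l • μ {y | (n:ℝ) < |T' y|} := by rw [Nat.card_Icc]; simp
    have hne : l • μ {y : X | (n:ℝ) < |T' y|} ≠ ⊤ := by
      rw [nsmul_eq_mul]
      exact ENNReal.mul_ne_top (ENNReal.natCast_ne_top l) (measure_ne_top μ _)
    have htail' : (μ {y : X | (n:ℝ) < |T' y|}).toReal ≤ (n:ℝ) ^ (-τ) := (htail _ hn).le
    calc (μ ((⋂ j ∈ Finset.Icc 1 l, T^[j] ⁻¹' {y | |T' y| ≤ (n : ℝ)})ᶜ)).toReal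
        ≤ (l • μ {y : X | (n:ℝ) < |T' y|}).toReal := ENNReal.toReal_mono hne hsum
      _ = (l:ℝ) * (μ {y : X | (n:ℝ) < |T' y|}).toReal := by
          rw [nsmul_eq_mul, ENNReal.toReal_mul]; simp
      _ ≤ (l:ℝ) * (n:ℝ)^(-τ) := mul_le_mul_of_nonneg_left htail' (Nat.cast_nonneg l)
  refine ⟨part1, part2, ?_⟩
  -- Part (3)
  intro A hA
  obtain ⟨ρ₁, hρ₁pos, hH⟩ := hlarge A hA
  have hβpos : 0 < (A + 2) / τ := by positivity
  set β := (A + 2) / τ with hβdef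
  have hlog2pos : 0 < Real.log 2 := Real.log_pos one_lt_two
  set cP := Real.log 2 + A^2 + A^4 * (Real.log 2 + β) with hcPdef
  have hcP0 : 0 < cP := by
    have h3 : 0 < A^4 * (Real.log 2 + β) := mul_pos (by positivity) (by linarith)
    have h4 : 0 < A^2 := by positivity
    rw [hcPdef]; linarith
  have hpoly : ∀ᶠ lg : ℝ in atTop, cP * lg^3 ≤ Real.exp lg / 2 := by
    have h0 := Real.tendsto_pow_mul_exp_neg_atTop_nhds_zero 3
    have hev0 := h0.eventually_lt_const (show (0:ℝ) < 1/(2*cP) by positivity)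
    filter_upwards [hev0, eventually_ge_atTop (0:ℝ)] with lg hlt hge
    have hexp : 0 < Real.exp lg := Real.exp_pos lg
    rw [Real.exp_neg, ← div_eq_mul_inv, div_lt_div_iff₀ hexp (by positivity)] at hlt
    nlinarith
  have hev : ∀ᶠ y : ℝ in atTop,
      (1 ≤ Real.log y) ∧ (max t₀ 1 ≤ y ^ β) ∧
      (2 * (A^2 * Real.log y + 1) * (2 * y ^ β) ^ ((A^2 * Real.log y)^2) ≤ Real.exp (y / 2)) ∧
      ((A^2 * Real.log y + 1)^2 ≤ y^2) ∧ (Real.exp (-(y / 2)) < ρ₁) := by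
    have e1 : ∀ᶠ y : ℝ in atTop, 1 ≤ Real.log y :=
      Real.tendsto_log_atTop.eventually_ge_atTop 1
    have e2 : ∀ᶠ y : ℝ in atTop, max t₀ 1 ≤ y ^ β :=
      (tendsto_rpow_atTop hβpos).eventually_ge_atTop _
    have e5 : ∀ᶠ y : ℝ in atTop, Real.exp (-(y / 2)) < ρ₁ := by
      have ht : Tendsto (fun y : ℝ => Real.exp (-(y / 2))) atTop (nhds 0) := by
        have hdiv : Tendsto (fun y : ℝ => y / 2) atTop atTop :=
          Filter.Tendsto.atTop_div_const two_pos tendsto_id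
        exact Real.tendsto_exp_neg_atTop_nhds_zero.comp hdiv
      exact ht.eventually_lt_const hρ₁pos
    have hlin : ∀ᶠ y : ℝ in atTop, A^2 * Real.log y + 1 ≤ y := by
      have hlo := Asymptotics.isLittleO_iff.mp Real.isLittleO_log_id_atTop
        (show (0:ℝ) < 1/(2*(A^2+1)) by positivity)
      filter_upwards [hlo, eventually_ge_atTop (2:ℝ)] with y hy h2y
      simp only [Real.norm_eq_abs, id_eq] at hy
      rw [abs_of_nonneg (show (0:ℝ) ≤ y by linarith)] at hy
      have h1 : Real.log y ≤ 1/(2*(A^2+1)) * y := le_trans (le_abs_self _) hy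
      have h2 : A^2 * Real.log y ≤ A^2 * (1/(2*(A^2+1)) * y) :=
        mul_le_mul_of_nonneg_left h1 (sq_nonneg A)
      have h3 : A^2 * (1/(2*(A^2+1)) * y) ≤ y/2 := by
        rw [show A^2 * (1/(2*(A^2+1)) * y) = y * (A^2 / (2*(A^2+1))) by ring]
        have : A^2 / (2*(A^2+1)) ≤ 1/2 := by
          rw [div_le_div_iff₀ (by positivity) two_pos]
          nlinarith [sq_nonneg A]
        nlinarith [this, h2y]
      linarith
    have e4 : ∀ᶠ y : ℝ in atTop, (A^2 * Real.log y + 1)^2 ≤ y^2 := by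
      filter_upwards [hlin, e1, eventually_ge_atTop (0:ℝ)] with y h1 h2 h3
      have h0 : 0 ≤ A^2 * Real.log y + 1 := by nlinarith [sq_nonneg A]
      exact pow_le_pow_left₀ h0 h1 2
    have e3 : ∀ᶠ y : ℝ in atTop,
        2 * (A^2 * Real.log y + 1) * (2 * y ^ β) ^ ((A^2 * Real.log y)^2)
          ≤ Real.exp (y / 2) := by
      have hup := Real.tendsto_log_atTop.eventually hpoly
      filter_upwards [hup, e1, e2, eventually_gt_atTop (0:ℝ)] with y hp h1 h2 hy0
      set lg := Real.log y with hlgdef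
      have hKnn : 0 ≤ A^2 * lg := mul_nonneg (sq_nonneg A) (by linarith)
      have hyβ1 : (1:ℝ) ≤ y ^ β := le_trans (le_max_right _ _) h2
      have hbasepos : (0:ℝ) < 2 * y ^ β := by linarith
      have hrpos : (0:ℝ) < (2*y^β)^((A^2*lg)^2) := Real.rpow_pos_of_pos hbasepos _
      have hLHSpos : 0 < 2 * (A^2*lg + 1) * (2*y^β)^((A^2*lg)^2) := by
        have : (0:ℝ) < A^2*lg + 1 := by linarith
        positivity
      have hlogLHS : Real.log (2 * (A^2*lg + 1) * (2*y^β)^((A^2*lg)^2))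
          = Real.log 2 + Real.log (A^2*lg+1) + (A^2*lg)^2 * Real.log (2*y^β) := by
        rw [Real.log_mul (by positivity) (ne_of_gt hrpos),
          Real.log_mul two_ne_zero (by positivity), Real.log_rpow hbasepos]
      have hb1 : Real.log (A^2*lg+1) ≤ A^2*lg := by
        have := Real.log_le_sub_one_of_pos (show (0:ℝ) < A^2*lg+1 by linarith)
        linarith
      have hb2 : Real.log (2*y^β) ≤ (Real.log 2 + β) * lg := by
        rw [Real.log_mul two_ne_zero (by positivity), Real.log_rpow hy0]
        have hl2 : Real.log 2 ≤ Real.log 2 * lg := le_mul_of_one_le_right hlog2pos.le h1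
        nlinarith
      have hfinal : Real.log (2 * (A^2*lg + 1) * (2*y^β)^((A^2*lg)^2)) ≤ cP * lg^3 := by
        rw [hlogLHS]
        have hmul : (A^2*lg)^2 * Real.log (2*y^β) ≤ A^4*lg^2*((Real.log 2+β)*lg) := by
          have hsq : (A^2*lg)^2 = A^4*lg^2 := by ring
          rw [hsq]
          exact mul_le_mul_of_nonneg_left hb2 (by positivity)
        have h1lg3 : (1:ℝ) ≤ lg^3 := one_le_pow₀ h1
        have hlglg3 : lg ≤ lg^3 := by
          have h2' : (1:ℝ) ≤ lg^2 := one_le_pow₀ h1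
          calc lg = lg * 1 := by ring
            _ ≤ lg * lg^2 := mul_le_mul_of_nonneg_left h2' (by linarith)
            _ = lg^3 := by ring
        have h5 : Real.log 2 ≤ Real.log 2 * lg^3 := le_mul_of_one_le_right hlog2pos.le h1lg3
        have h6 : A^2*lg ≤ A^2*lg^3 := mul_le_mul_of_nonneg_left hlglg3 (sq_nonneg A)
        rw [hcPdef]
        linarith [hmul, hb1, h5, h6]
      have hexplg : Real.exp lg = y := Real.exp_log hy0
      have hle : Real.log (2 * (A^2*lg + 1) * (2*y^β)^((A^2*lg)^2)) ≤ y/2 := by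
        have hthis : cP * lg^3 ≤ Real.exp lg / 2 := hp
        rw [hexplg] at hthis
        exact le_trans hfinal hthis
      calc 2 * (A^2*lg + 1) * (2*y^β)^((A^2*lg)^2)
          = Real.exp (Real.log (2 * (A^2*lg + 1) * (2*y^β)^((A^2*lg)^2))) :=
            (Real.exp_log hLHSpos).symm
        _ ≤ Real.exp (y/2) := Real.exp_le_exp.mpr hle
    exact e1.and (e2.and (e3.and (e4.and e5)))
  obtain ⟨M, hM⟩ := eventually_atTop.mp hev
  refine ⟨2 ^ (2*A) + 1, by positivity, min ρ₁ (Real.exp (-(max M 1))),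
    lt_min hρ₁pos (Real.exp_pos _), ?_⟩
  intro ρ hρpos hρlt k hk
  have hρρ₁ : ρ < ρ₁ := lt_of_lt_of_le hρlt (min_le_left _ _)
  have hρe : ρ < Real.exp (-(max M 1)) := lt_of_lt_of_le hρlt (min_le_right _ _)
  have hlogρ : Real.log ρ < -(max M 1) := by
    have h := Real.log_lt_log hρpos hρe
    rwa [Real.log_exp] at h
  set y := -Real.log ρ with hydef
  have hyM : max M 1 < y := by rw [hydef]; linarith
  have hy1 : 1 < y := lt_of_le_of_lt (le_max_right M 1) hyM
  have hy0 : (0:ℝ) < y := by linarith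
  have habs : |Real.log ρ| = y := by
    rw [hydef, abs_of_neg (show Real.log ρ < 0 by
      have := le_max_right M 1; linarith)]
  obtain ⟨h1, h2, h3, h4, h5⟩ := hM y (le_of_lt (lt_of_le_of_lt (le_max_left M 1) hyM))
  set lg := Real.log y with hlgdef
  have hCf1 : (1:ℝ) ≤ 2^(2*A) + 1 := by
    have := Real.rpow_pos_of_pos (show (0:ℝ) < 2 by norm_num) (2*A)
    linarith
  by_cases hcase : A^2 * lg ≤ (k:ℝ)
  · -- large k: apply hlarge directly
    have hb := hH ρ hρpos hρρ₁ k (by rw [habs]; exact hcase)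
    have hmono : y ^ (-(2*A)) ≤ y ^ (-A) :=
      Real.rpow_le_rpow_of_exponent_le hy1.le (by linarith)
    have hpos : (0:ℝ) ≤ y ^ (-A) := Real.rpow_nonneg hy0.le _
    calc (μ {x | dist x (T^[k] x) < ρ}).toReal ≤ |Real.log ρ| ^ (-(2*A)) := hb
      _ = y ^ (-(2*A)) := by rw [habs]
      _ ≤ y ^ (-A) := hmono
      _ ≤ (2^(2*A)+1) * y^(-A) := le_mul_of_one_le_left hpos hCf1
      _ = (2^(2*A)+1) * |Real.log ρ| ^ (-A) := by rw [habs]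
  · -- small k: chaining argument
    push_neg at hcase
    have hk1 : (1:ℝ) ≤ (k:ℝ) := by exact_mod_cast hk
    have hK1 : (1:ℝ) ≤ A^2*lg := le_trans hk1 hcase.le
    set L := ⌈A^2*lg⌉₊ with hLdef
    have hKL : A^2*lg ≤ (L:ℝ) := Nat.le_ceil _
    have hL1 : 1 ≤ L := by
      have : (0:ℕ) < L := Nat.ceil_pos.mpr (by linarith)
      omega
    have hLub : (L:ℝ) ≤ A^2*lg + 1 := (Nat.ceil_lt_add_one (by linarith : (0:ℝ) ≤ A^2*lg)).le
    set n := ⌈max t₀ (y^β)⌉₊ with hndef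
    have ht₀yβ : t₀ ≤ y^β := le_trans (le_max_left t₀ 1) h2
    have h1yβ : (1:ℝ) ≤ y^β := le_trans (le_max_right t₀ 1) h2
    have hmax : max t₀ (y^β) = y^β := max_eq_right ht₀yβ
    have hnt₀ : t₀ ≤ (n:ℝ) := le_trans (le_max_left _ _) (Nat.le_ceil _)
    have hnyβ : y^β ≤ (n:ℝ) := le_trans (le_max_right _ _) (Nat.le_ceil _)
    have hn1 : (1:ℝ) ≤ (n:ℝ) := le_trans h1yβ hnyβ
    have hnub : (n:ℝ) ≤ 2*y^β := by
      have h : ((n : ℕ) : ℝ) < max t₀ (y^β) + 1 := by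
        rw [hndef]
        exact Nat.ceil_lt_add_one (le_trans (by linarith : (0:ℝ) ≤ y^β) (le_max_right _ _))
      rw [hmax] at h
      linarith
    have hkK : (k:ℝ) ≤ A^2*lg := hcase.le
    have hLk_low : A^2*lg ≤ ((L*k:ℕ):ℝ) := by
      push_cast
      calc A^2*lg ≤ (L:ℝ) := hKL
        _ ≤ (L:ℝ)*(k:ℝ) := le_mul_of_one_le_right (by positivity) hk1
    have hexpub : (((L-1)*k:ℕ):ℝ) ≤ (A^2*lg)^2 := by
      have hc : ((L-1:ℕ):ℝ) = (L:ℝ) - 1 := by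
        rw [Nat.cast_sub hL1]; simp
      push_cast [hc]
      have hL1' : (L:ℝ) - 1 ≤ A^2*lg := by linarith
      have hknn : (0:ℝ) ≤ (k:ℝ) := by linarith
      calc ((L:ℝ)-1)*(k:ℝ) ≤ (A^2*lg)*(A^2*lg) :=
            mul_le_mul hL1' hkK hknn (by linarith)
        _ = (A^2*lg)^2 := by ring
    have hLkub : ((L*k:ℕ):ℝ) ≤ (A^2*lg+1)^2 := by
      push_cast
      calc (L:ℝ)*(k:ℝ) ≤ (A^2*lg+1)*(A^2*lg+1) :=
            mul_le_mul hLub (by linarith) (by linarith) (by linarith)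
        _ = (A^2*lg+1)^2 := by ring
    set e := (L-1)*k with hedef
    set ρ' := 2 * ((L:ℝ) * (n:ℝ)^e * ρ) with hρ'def
    have hLpos : (0:ℝ) < (L:ℝ) := by exact_mod_cast hL1
    have hnpow1 : (1:ℝ) ≤ (n:ℝ)^e := one_le_pow₀ hn1
    have hnpow_pos : (0:ℝ) < (n:ℝ)^e := by linarith
    have hρ'pos : 0 < ρ' := by
      rw [hρ'def]
      exact mul_pos two_pos (mul_pos (mul_pos hLpos hnpow_pos) hρpos)
    have hbase1 : (1:ℝ) ≤ 2*y^β := by linarith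
    have hmult : 2 * ((L:ℝ) * (n:ℝ)^e) ≤ Real.exp (y/2) := by
      have s1 : (n:ℝ)^e ≤ (2*y^β)^e := pow_le_pow_left₀ (by linarith) hnub e
      have s2 : ((2*y^β):ℝ)^e = (2*y^β) ^ ((e:ℕ):ℝ) := (Real.rpow_natCast _ e).symm
      have s3 : ((2*y^β):ℝ) ^ ((e:ℕ):ℝ) ≤ (2*y^β) ^ ((A^2*lg)^2) :=
        Real.rpow_le_rpow_of_exponent_le hbase1 hexpub
      have s13 : (n:ℝ)^e ≤ (2*y^β) ^ ((A^2*lg)^2) := by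
        rw [s2] at s1; exact le_trans s1 s3
      calc 2*((L:ℝ)*(n:ℝ)^e) ≤ 2*((A^2*lg+1) * ((2*y^β) ^ ((A^2*lg)^2))) := by
            apply mul_le_mul_of_nonneg_left _ (by norm_num)
            exact mul_le_mul hLub s13 (by linarith) (by linarith)
        _ = 2*(A^2*lg+1) * (2*y^β) ^ ((A^2*lg)^2) := by ring
        _ ≤ Real.exp (y/2) := h3
    have hρexp : ρ = Real.exp (-y) := by
      rw [hydef, neg_neg, Real.exp_log hρpos]
    have hρ'ub : ρ' ≤ Real.exp (-(y/2)) := by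
      calc ρ' = 2*((L:ℝ)*(n:ℝ)^e) * ρ := by rw [hρ'def]; ring
        _ ≤ Real.exp (y/2) * ρ := mul_le_mul_of_nonneg_right hmult hρpos.le
        _ = Real.exp (y/2) * Real.exp (-y) := by rw [← hρexp]
        _ = Real.exp (-(y/2)) := by rw [← Real.exp_add]; ring_nf
    have hρ'ρ₁ : ρ' < ρ₁ := lt_of_le_of_lt hρ'ub h5
    have hρ'lt1 : ρ' < 1 := by
      apply lt_of_le_of_lt hρ'ub
      exact Real.exp_lt_one_iff.mpr (by linarith)
    have hρρ' : ρ ≤ ρ' := by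
      have hLn : (1:ℝ) ≤ (L:ℝ)*(n:ℝ)^e := by
        calc (1:ℝ) = 1*1 := by ring
          _ ≤ (L:ℝ)*(n:ℝ)^e :=
              mul_le_mul (by exact_mod_cast hL1) hnpow1 zero_le_one (by linarith)
      rw [hρ'def]
      calc ρ = 1*ρ := (one_mul ρ).symm
        _ ≤ (2*((L:ℝ)*(n:ℝ)^e))*ρ :=
            mul_le_mul_of_nonneg_right (by linarith) hρpos.le
        _ = 2*((L:ℝ)*(n:ℝ)^e*ρ) := by ring
    have hlogρ'neg : Real.log ρ' < 0 := Real.log_neg hρ'pos hρ'lt1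
    have hlogρ'lb : y/2 ≤ -Real.log ρ' := by
      have h := Real.log_le_log hρ'pos hρ'ub
      rw [Real.log_exp] at h; linarith
    have hlogρ'ub : -Real.log ρ' ≤ y := by
      have h := Real.log_le_log hρpos hρρ'
      rw [hydef]; linarith
    have habs' : |Real.log ρ'| = -Real.log ρ' := abs_of_neg hlogρ'neg
    have hcond : A^2 * Real.log |Real.log ρ'| ≤ ((L*k:ℕ):ℝ) := by
      rw [habs']
      have hpos' : (0:ℝ) < -Real.log ρ' := by linarith
      have hle : Real.log (-Real.log ρ') ≤ lg := Real.log_le_log hpos' hlogρ'ub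
      calc A^2 * Real.log (-Real.log ρ') ≤ A^2 * lg :=
            mul_le_mul_of_nonneg_left hle (sq_nonneg A)
        _ ≤ ((L*k:ℕ):ℝ) := hLk_low
    have hS := hH ρ' hρ'pos hρ'ρ₁ (L*k) hcond
    set I := ⋂ j ∈ Finset.Icc 1 (L*k), T^[j] ⁻¹' {z | |T' z| ≤ (n:ℝ)} with hIdef
    have hincl : {x | dist x (T^[k] x) < ρ}
        ⊆ {x | dist x (T^[L*k] x) < ρ'} ∪ Iᶜ := by
      intro x hx
      by_cases hxI : x ∈ I
      · left
        have hd := part1 x ρ n k L (L*k) hk (le_of_lt hx) hxI le_rfl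
        have hlt : (L:ℝ)*(n:ℝ)^((L-1)*k)*ρ < ρ' := by
          have ha : (0:ℝ) < (L:ℝ)*(n:ℝ)^e*ρ :=
            mul_pos (mul_pos hLpos hnpow_pos) hρpos
          rw [hρ'def]
          have he2 : (L:ℝ)*(n:ℝ)^((L-1)*k)*ρ = (L:ℝ)*(n:ℝ)^e*ρ := by rw [hedef]
          rw [he2]
          linarith
        exact lt_of_le_of_lt hd hlt
      · right; exact hxI
    have hmeas1 : (μ {x | dist x (T^[k] x) < ρ}).toReal
        ≤ (μ {x | dist x (T^[L*k] x) < ρ'}).toReal + (μ Iᶜ).toReal := by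
      have hμle : μ {x | dist x (T^[k] x) < ρ} ≤ μ {x | dist x (T^[L*k] x) < ρ'} + μ Iᶜ :=
        le_trans (measure_mono hincl) (measure_union_le _ _)
      calc (μ {x | dist x (T^[k] x) < ρ}).toReal
          ≤ (μ {x | dist x (T^[L*k] x) < ρ'} + μ Iᶜ).toReal :=
            ENNReal.toReal_mono
              (ENNReal.add_ne_top.mpr ⟨measure_ne_top μ _, measure_ne_top μ _⟩) hμle
        _ ≤ _ := ENNReal.toReal_add_le
    have ht1 : (μ {x | dist x (T^[L*k] x) < ρ'}).toReal ≤ 2^(2*A) * y^(-A) := by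
      have hstep1 : |Real.log ρ'| ^ (-(2*A)) ≤ (y/2) ^ (-(2*A)) := by
        rw [habs']
        exact rpow_base_anti (by linarith) hlogρ'lb (by linarith)
      have hstep2 : ((y/2):ℝ) ^ (-(2*A)) = 2^(2*A) * y^(-(2*A)) := by
        rw [Real.div_rpow hy0.le (by norm_num : (0:ℝ) ≤ 2)]
        have hinv : ((2:ℝ)^(-(2*A)))⁻¹ = 2^(2*A) := by
          rw [← Real.rpow_neg (by norm_num : (0:ℝ) ≤ 2), neg_neg]
        rw [div_eq_mul_inv, hinv, mul_comm]
      have hstep3 : y^(-(2*A)) ≤ y^(-A) :=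
        Real.rpow_le_rpow_of_exponent_le hy1.le (by linarith)
      calc (μ {x | dist x (T^[L*k] x) < ρ'}).toReal ≤ |Real.log ρ'| ^ (-(2*A)) := hS
        _ ≤ (y/2) ^ (-(2*A)) := hstep1
        _ = 2^(2*A) * y^(-(2*A)) := hstep2
        _ ≤ 2^(2*A) * y^(-A) := mul_le_mul_of_nonneg_left hstep3 (by positivity)
    have ht2 : (μ Iᶜ).toReal ≤ y^(-A) := by
      have hβτ : β * (-τ) = -(A+2) := by
        rw [hβdef]; field_simp
      have hyβpos : (0:ℝ) < y^β := by linarith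
      have hnτ : (n:ℝ)^(-τ) ≤ (y^β)^(-τ) := rpow_base_anti hyβpos hnyβ (by linarith)
      have hyβτ : ((y^β):ℝ)^(-τ) = y^(-(A+2)) := by
        rw [← Real.rpow_mul hy0.le, hβτ]
      calc (μ Iᶜ).toReal ≤ ((L*k:ℕ):ℝ) * (n:ℝ)^(-τ) := part2 n (L*k) hnt₀
        _ ≤ (A^2*lg+1)^2 * (y^β)^(-τ) := by
            apply mul_le_mul hLkub hnτ (Real.rpow_nonneg (by linarith) _) (by positivity)
        _ = (A^2*lg+1)^2 * y^(-(A+2)) := by rw [hyβτ]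
        _ ≤ y^2 * y^(-(A+2)) :=
            mul_le_mul_of_nonneg_right h4 (Real.rpow_nonneg hy0.le _)
        _ = y^(-A) := by
            rw [show (y:ℝ)^2 = y^((2:ℕ):ℝ) from (Real.rpow_natCast y 2).symm,
              ← Real.rpow_add hy0]
            norm_num
    calc (μ {x | dist x (T^[k] x) < ρ}).toReal
        ≤ (μ {x | dist x (T^[L*k] x) < ρ'}).toReal + (μ Iᶜ).toReal := hmeas1
      _ ≤ 2^(2*A) * y^(-A) + y^(-A) := add_le_add ht1 ht2
      _ = (2^(2*A)+1) * y^(-A) := by ring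
      _ = (2^(2*A)+1) * |Real.log ρ| ^ (-A) := by rw [habs]
end

section
/- Let T : [0,1] → [0,1] be a piecewise expanding map preserving an ergodic measure μ absolutely continuous with respect to Lebesgue, satisfying the BV multiple-mixing inequality of the previous statement, with balls E_ρ = B(x, ρ) around a Diophantine point x, σ(ρ) = μ(E_ρ) satisfying c₁ρ ≤ σ(ρ) ≤ c₂ρ. Set ρ_n = n^{-1}(ln n)^{-δ}. Then for s(n) = R ln n with R sufficiently large: for any 0 < k₁ < ... < k_r ≤ n with all gaps ≥ R ln n, C^{-1}σ(ρ_n)^r ≤ μ(⋂_{j=1}^r T^{-k_j}B(x, ρ_n)) ≤ C σ(ρ_n)^r. -/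
/-!
Apply the multiple-mixing inequality to `r` copies of the indicator of `B(x, ρ_n)`. Its
`L¹`-norm is `σ = σ(ρ_n)` and its variation is at most `2`, so every factor of the mixing
bound differs from `σ` by at most `Cm (σ + 2) θ^{gap}`. Once `R ln θ ≤ -2`, a gap of at least
`R ln n` makes this error `O(n⁻²)`, which is negligible against `σ ≥ c₁ n⁻¹ (ln n)^{-δ}`; so for
large `n` every factor lies in `[σ / 2, 2σ]`, and `C = 2^r` works.
-/

open MeasureTheory Metric Set Filter

theorem MonotoneOn.eVariationOn_le_of_mapsTo_Icc {α : Type*} [LinearOrder α] {f : α → ℝ}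
    {s : Set α} {c d : ℝ} (hf : MonotoneOn f s) (hfs : MapsTo f s (Icc c d)) :
    eVariationOn f s ≤ .ofReal (d - c) := by
  rw [eVariationOn.eq_biSup_inter_Icc]
  refine iSup₂_le fun p ⟨hp₁, hp₂, _⟩ => ?_
  rw [hf.eVariationOn_eq hp₁ hp₂]
  exact ENNReal.ofReal_le_ofReal (by linarith [(hfs hp₁).1, (hfs hp₂).2])

theorem AntitoneOn.eVariationOn_le_of_mapsTo_Icc {α : Type*} [LinearOrder α] {f : α → ℝ}
    {s : Set α} {c d : ℝ} (hf : AntitoneOn f s) (hfs : MapsTo f s (Icc c d)) :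
    eVariationOn f s ≤ .ofReal (d - c) := by
  rw [← eVariationOn.comp_ofDual]
  exact MonotoneOn.eVariationOn_le_of_mapsTo_Icc hf.dual_left fun _ hx => hfs hx

theorem eVariationOn_indicator_Ioo_le_two (a b : ℝ) (s : Set ℝ) :
    eVariationOn ((Ioo a b).indicator (1 : ℝ → ℝ)) s ≤ 2 := by
  have hmaps : ∀ t : Set ℝ, MapsTo (t.indicator (1 : ℝ → ℝ)) s (Icc 0 1) := fun t y _ => by
    by_cases hy : y ∈ t <;> simp [hy]
  have hnorm : ∀ t : Set ℝ, ∀ y ∈ s, ‖t.indicator (1 : ℝ → ℝ) y‖ₑ ≤ 1 := fun t y _ => by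
    by_cases hy : y ∈ t <;> simp [hy]
  have hIoi : eVariationOn ((Ioi a).indicator (1 : ℝ → ℝ)) s ≤ 1 := by
    simpa using MonotoneOn.eVariationOn_le_of_mapsTo_Icc
      (fun y _ z _ hyz => by
        simp only [indicator_apply, mem_Ioi, Pi.one_apply]; split_ifs <;> grind) (hmaps (Ioi a))
  have hIio : eVariationOn ((Iio b).indicator (1 : ℝ → ℝ)) s ≤ 1 := by
    simpa using AntitoneOn.eVariationOn_le_of_mapsTo_Icc
      (fun y _ z _ hyz => by
        simp only [indicator_apply, mem_Iio, Pi.one_apply]; split_ifs <;> grind) (hmaps (Iio b))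
  rw [← Ioi_inter_Iio, inter_indicator_one]
  calc _ ≤ 1 * eVariationOn ((Iio b).indicator (1 : ℝ → ℝ)) s
        + 1 * eVariationOn ((Ioi a).indicator (1 : ℝ → ℝ)) s :=
        eVariation_mul_le (hnorm _) (hnorm _)
    _ ≤ 2 := by rw [one_mul, one_mul, ← one_add_one_eq_two]; exact add_le_add hIio hIoi

theorem Finset.pow_card_le_prod_sub_of_abs_le {ι : Type*} (s : Finset ι) {σ : ℝ} {e : ι → ℝ}
    (he : ∀ j ∈ s, |e j| ≤ σ / 2) : (σ / 2) ^ s.card ≤ ∏ j ∈ s, (σ - e j) := by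
  rw [← Finset.prod_const]
  exact Finset.prod_le_prod (fun j hj => (abs_nonneg _).trans (he j hj))
    fun j hj => by linarith [le_abs_self (e j), he j hj]

theorem Finset.prod_add_le_pow_card_of_abs_le {ι : Type*} (s : Finset ι) {σ : ℝ} {e : ι → ℝ}
    (he : ∀ j ∈ s, |e j| ≤ σ / 2) : ∏ j ∈ s, (σ + e j) ≤ (2 * σ) ^ s.card := by
  rw [← Finset.prod_const]
  exact Finset.prod_le_prod
    (fun j hj => by linarith [neg_abs_le (e j), he j hj, abs_nonneg (e j)])
    fun j hj => by linarith [le_abs_self (e j), he j hj, abs_nonneg (e j)]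

theorem exists_strictMono_eq_of_lt_succ {k : ℕ → ℕ} {m : ℕ} (hk : ∀ j < m, k j < k (j + 1)) :
    ∃ κ : ℕ → ℕ, StrictMono κ ∧ ∀ j ≤ m, κ j = k j := by
  refine ⟨fun j => k (min j m) + (j - m), strictMono_nat_of_lt_succ fun j => ?_,
    fun j hj => by simp [hj]⟩
  rcases lt_or_ge j m with hj | hj
  · simp only [min_eq_left hj.le, min_eq_left (Nat.succ_le_of_lt hj),
      Nat.sub_eq_zero_of_le hj.le, Nat.sub_eq_zero_of_le (Nat.succ_le_of_lt hj)]
    simpa using hk j hj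
  · simp only [min_eq_right hj, min_eq_right (hj.trans (Nat.le_succ j))]
    omega

theorem integral_prod_indicator_comp_iterate {μ : Measure ℝ} {T : ℝ → ℝ} (hT : Measurable T)
    {B : Set ℝ} (hB : MeasurableSet B) (κ : ℕ → ℕ) (s : Finset ℕ) :
    ∫ y, ∏ j ∈ s, B.indicator 1 (T^[κ j] y) ∂μ = μ.real (⋂ j ∈ s, T^[κ j] ⁻¹' B) := by
  have hprod : ∀ y, ∏ j ∈ s, B.indicator (1 : ℝ → ℝ) (T^[κ j] y)
      = (⋂ j ∈ s, T^[κ j] ⁻¹' B).indicator 1 y := fun y => by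
    simp only [← indicator_comp_right, Pi.one_comp]
    rw [prod_indicator_const_apply, one_pow]
  simp_rw [hprod]
  exact integral_indicator_one
    (.biInter (to_countable _) fun j _ => hB.preimage (hT.iterate (κ j)))

theorem pow_le_inv_sq_of_mul_log_le {θ R t : ℝ} {g : ℕ} (hθ0 : 0 < θ) (hθ1 : θ < 1)
    (hR : 2 ≤ R * -Real.log θ) (ht : 1 ≤ t) (hg : R * Real.log t ≤ g) : θ ^ g ≤ (t ^ 2)⁻¹ := by
  have hlogθ := Real.log_neg hθ0 hθ1
  have hlogt := Real.log_nonneg ht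
  calc θ ^ g = Real.exp (g * Real.log θ) := by rw [Real.exp_nat_mul, Real.exp_log hθ0]
    _ ≤ Real.exp (-Real.log (t ^ 2)) := by
      rw [Real.exp_le_exp, Real.log_pow, Nat.cast_ofNat]
      nlinarith [mul_le_mul_of_nonpos_right hg hlogθ.le, mul_le_mul_of_nonneg_right hR hlogt]
    _ = (t ^ 2)⁻¹ := by rw [Real.exp_neg, Real.exp_log (by positivity)]

theorem eventually_log_rpow_le_mul (r : ℝ) {c : ℝ} (hc : 0 < c) :
    ∀ᶠ n : ℕ in atTop, Real.log n ^ r ≤ c * n := by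
  filter_upwards [((isLittleO_log_rpow_rpow_atTop r one_pos).comp_tendsto
    tendsto_natCast_atTop_atTop).bound hc, eventually_ge_atTop 1] with n hn hn1
  have hlog : 0 ≤ Real.log n := Real.log_nonneg (by exact_mod_cast hn1)
  simpa [abs_of_nonneg (Real.rpow_nonneg hlog r)] using hn

theorem eventually_inv_mul_log_rpow_mem_Ioo (δ : ℝ) :
    ∀ᶠ n : ℕ in atTop, (n : ℝ)⁻¹ * Real.log n ^ (-δ) ∈ Ioo 0 1 := by
  filter_upwards [eventually_log_rpow_le_mul (-δ) one_half_pos, eventually_ge_atTop 2]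
    with n hn hn2
  have hn : (2 : ℝ) ≤ n := by exact_mod_cast hn2
  have hlog : 0 < Real.log n := Real.log_pos (by linarith)
  refine ⟨by positivity, ?_⟩
  rw [inv_mul_lt_iff₀ (by positivity)]
  linarith

theorem eventually_const_mul_inv_sq_le_inv_mul_log_rpow (δ : ℝ) {A c : ℝ} (hA : 0 < A)
    (hc : 0 < c) :
    ∀ᶠ n : ℕ in atTop, A * ((n : ℝ) ^ 2)⁻¹ ≤ c * ((n : ℝ)⁻¹ * Real.log n ^ (-δ)) := by
  filter_upwards [eventually_log_rpow_le_mul δ (div_pos hc hA), eventually_ge_atTop 2]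
    with n hL hn2
  have hn : (2 : ℝ) ≤ n := by exact_mod_cast hn2
  have hlog : 0 < Real.log n := Real.log_pos (by linarith)
  have hL0 : 0 < Real.log n ^ δ := Real.rpow_pos_of_pos hlog δ
  rw [div_mul_eq_mul_div, le_div_iff₀ hA] at hL
  rw [Real.rpow_neg hlog.le]
  field_simp
  nlinarith

def HasBVMultipleMixing (μ : Measure ℝ) (T : ℝ → ℝ) (Cm θ : ℝ) : Prop :=
  ∀ (q : ℕ), 1 ≤ q → ∀ (ψ : ℕ → ℝ → ℝ),
    (∀ j x, 0 ≤ ψ j x) →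
    (∀ j, eVariationOn (ψ j) (Set.Icc 0 1) ≠ ⊤) →
    ∀ (k : ℕ → ℕ), StrictMono k →
    ((∏ j ∈ Finset.range (q - 1),
        ((∫ x, |ψ j x| ∂μ) -
          Cm * ((∫ x, |ψ j x| ∂μ) + (eVariationOn (ψ j) (Set.Icc 0 1)).toReal) *
            θ ^ (k (j + 1) - k j))) * (∫ x, |ψ (q - 1) x| ∂μ) ≤
      ∫ x, ∏ j ∈ Finset.range q, ψ j (T^[k j] x) ∂μ) ∧
    ((∫ x, ∏ j ∈ Finset.range q, ψ j (T^[k j] x) ∂μ) ≤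
      (∏ j ∈ Finset.range (q - 1),
        ((∫ x, |ψ j x| ∂μ) +
          Cm * ((∫ x, |ψ j x| ∂μ) + (eVariationOn (ψ j) (Set.Icc 0 1)).toReal) *
            θ ^ (k (j + 1) - k j))) * (∫ x, |ψ (q - 1) x| ∂μ))

theorem HasBVMultipleMixing.measureReal_biInter_preimage_iterate_mem_Icc
    {μ : Measure ℝ} {T : ℝ → ℝ} {Cm θ : ℝ} (hmix : HasBVMultipleMixing μ T Cm θ)
    (hT : Measurable T) {B : Set ℝ} (hB : MeasurableSet B)
    (hBV : eVariationOn (B.indicator (1 : ℝ → ℝ)) (Icc 0 1) ≠ ⊤) {κ : ℕ → ℕ}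
    (hκ : StrictMono κ) (m : ℕ)
    (hgap : ∀ j < m, |Cm * (μ.real B + (eVariationOn (B.indicator (1 : ℝ → ℝ)) (Icc 0 1)).toReal)
      * θ ^ (κ (j + 1) - κ j)| ≤ μ.real B / 2) :
    μ.real (⋂ j ∈ Finset.range (m + 1), T^[κ j] ⁻¹' B) ∈
      Icc ((μ.real B / 2) ^ m * μ.real B) ((2 * μ.real B) ^ m * μ.real B) := by
  have hint : ∫ y, |B.indicator (1 : ℝ → ℝ) y| ∂μ = μ.real B := by
    simp only [← Real.norm_eq_abs, norm_indicator_eq_indicator_norm, Pi.one_apply, norm_one]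
    exact integral_indicator_one hB
  obtain ⟨hlow, hup⟩ := hmix (m + 1) le_add_self (fun _ => B.indicator 1)
    (fun _ => indicator_nonneg fun _ _ => zero_le_one) (fun _ => hBV) κ hκ
  simp only [Nat.add_sub_cancel, hint, integral_prod_indicator_comp_iterate hT hB] at hlow hup
  have hgap' : ∀ j ∈ Finset.range m, _ := fun j hj => hgap j (Finset.mem_range.1 hj)
  have hσ : 0 ≤ μ.real B := measureReal_nonneg
  constructor
  · refine le_trans ?_ hlow
    gcongr
    simpa using (Finset.range m).pow_card_le_prod_sub_of_abs_le hgap'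
  · refine hup.trans ?_
    gcongr
    simpa using (Finset.range m).prod_add_le_pow_card_of_abs_le hgap'

theorem HasBVMultipleMixing.measureReal_biInter_preimage_ball_mem_Icc
    {μ : Measure ℝ} {T : ℝ → ℝ} {Cm θ : ℝ} (hmix : HasBVMultipleMixing μ T Cm θ)
    (hCm : 0 ≤ Cm) (hθ : 0 ≤ θ) (hT : Measurable T) (x ρ : ℝ) {κ : ℕ → ℕ} (hκ : StrictMono κ)
    (m : ℕ) (hgap : ∀ j < m,
      Cm * (μ.real (ball x ρ) + 2) * θ ^ (κ (j + 1) - κ j) ≤ μ.real (ball x ρ) / 2) :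
    μ.real (⋂ j ∈ Finset.range (m + 1), T^[κ j] ⁻¹' ball x ρ) ∈
      Icc ((2 ^ (m + 1))⁻¹ * μ.real (ball x ρ) ^ (m + 1))
        (2 ^ (m + 1) * μ.real (ball x ρ) ^ (m + 1)) := by
  set σ := μ.real (ball x ρ)
  have hσ : 0 ≤ σ := measureReal_nonneg
  have hV : eVariationOn ((ball x ρ).indicator (1 : ℝ → ℝ)) (Icc 0 1) ≤ 2 := by
    simpa only [Real.ball_eq_Ioo] using eVariationOn_indicator_Ioo_le_two _ _ _
  have hV' : (eVariationOn ((ball x ρ).indicator (1 : ℝ → ℝ)) (Icc 0 1)).toReal ≤ 2 :=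
    ENNReal.toReal_le_of_le_ofReal zero_le_two (by simpa using hV)
  obtain ⟨hlow, hup⟩ := hmix.measureReal_biInter_preimage_iterate_mem_Icc hT measurableSet_ball
    (ne_top_of_le_ne_top (by norm_num) hV) hκ m fun j hj => by
      rw [abs_of_nonneg (by positivity)]
      exact le_trans (by gcongr) (hgap j hj)
  constructor
  · calc (2 ^ (m + 1))⁻¹ * σ ^ (m + 1)
        _ = (σ / 2) ^ m * σ / 2 := by rw [div_pow, pow_succ, pow_succ]; ring
        _ ≤ (σ / 2) ^ m * σ := half_le_self (by positivity)
        _ ≤ _ := hlow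
  · calc _ ≤ (2 * σ) ^ m * σ := hup
      _ = 2 ^ m * σ ^ (m + 1) := by ring
      _ ≤ 2 ^ (m + 1) * σ ^ (m + 1) := by gcongr <;> norm_num

theorem biInter_Icc_one_eq_biInter_range {α : Type*} (f : ℕ → Set α) (m : ℕ) :
    ⋂ j ∈ Finset.Icc 1 (m + 1), f j = ⋂ j ∈ Finset.range (m + 1), f (j + 1) := by
  ext y
  simp only [mem_iInter, Finset.mem_Icc, Finset.mem_range]
  refine ⟨fun h j hj => h (j + 1) ⟨le_add_self, by omega⟩, fun h j hj => ?_⟩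
  simpa [Nat.sub_add_cancel hj.1] using h (j - 1) (by omega)

theorem stmt17_general (μ : Measure ℝ) [IsProbabilityMeasure μ]
    (T : ℝ → ℝ) (hT : MeasurePreserving T μ μ)
    (Cm θ : ℝ) (hCm : 0 < Cm) (hθ0 : 0 < θ) (hθ1 : θ < 1)
    -- BV multiple-mixing inequality (conclusion of the previous statement)
    (hmmix : ∀ (q : ℕ), 1 ≤ q → ∀ (ψ : ℕ → ℝ → ℝ),
      (∀ j x, 0 ≤ ψ j x) →
      (∀ j, eVariationOn (ψ j) (Set.Icc 0 1) ≠ ⊤) →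
      ∀ (k : ℕ → ℕ), StrictMono k →
      ((∏ j ∈ Finset.range (q - 1),
          ((∫ x, |ψ j x| ∂μ) -
            Cm * ((∫ x, |ψ j x| ∂μ) + (eVariationOn (ψ j) (Set.Icc 0 1)).toReal) *
              θ ^ (k (j + 1) - k j))) * (∫ x, |ψ (q - 1) x| ∂μ) ≤
        ∫ x, ∏ j ∈ Finset.range q, ψ j (T^[k j] x) ∂μ) ∧
      ((∫ x, ∏ j ∈ Finset.range q, ψ j (T^[k j] x) ∂μ) ≤
        (∏ j ∈ Finset.range (q - 1),
          ((∫ x, |ψ j x| ∂μ) +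
            Cm * ((∫ x, |ψ j x| ∂μ) + (eVariationOn (ψ j) (Set.Icc 0 1)).toReal) *
              θ ^ (k (j + 1) - k j))) * (∫ x, |ψ (q - 1) x| ∂μ)))
    (x : ℝ)
    (c₁ c₂ : ℝ) (hc₁ : 0 < c₁) (hc₂ : 0 < c₂)
    -- ball measure comparable to radius
    (hball : ∀ ρ : ℝ, 0 < ρ → ρ < 1 →
      c₁ * ρ ≤ (μ (ball x ρ)).toReal ∧ (μ (ball x ρ)).toReal ≤ c₂ * ρ)
    (δ : ℝ) (r : ℕ) (hr : 1 ≤ r) :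
    ∃ R₀ > (0 : ℝ), ∀ R : ℝ, R₀ ≤ R → ∃ C > (0 : ℝ), ∃ n₀ : ℕ, ∀ n : ℕ, n₀ ≤ n →
      ∀ k : ℕ → ℕ, k 0 = 0 → (∀ j < r, k j < k (j + 1)) → k r ≤ n →
        (∀ j < r, R * Real.log n ≤ (k (j + 1) : ℝ) - (k j : ℝ)) →
        C⁻¹ * ((μ (ball x ((n : ℝ)⁻¹ * Real.log n ^ (-δ)))).toReal) ^ r ≤
            (μ (⋂ j ∈ Finset.Icc 1 r,
              T^[k j] ⁻¹' ball x ((n : ℝ)⁻¹ * Real.log n ^ (-δ)))).toReal ∧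
          (μ (⋂ j ∈ Finset.Icc 1 r,
              T^[k j] ⁻¹' ball x ((n : ℝ)⁻¹ * Real.log n ^ (-δ)))).toReal ≤
            C * ((μ (ball x ((n : ℝ)⁻¹ * Real.log n ^ (-δ)))).toReal) ^ r := by
  obtain ⟨m, rfl⟩ : ∃ m, r = m + 1 := ⟨r - 1, by omega⟩
  have hlogθ : 0 < -Real.log θ := neg_pos.2 (Real.log_neg hθ0 hθ1)
  refine ⟨2 / -Real.log θ, by positivity, fun R hR => ⟨2 ^ (m + 1), by positivity, ?_⟩⟩
  rw [div_le_iff₀ hlogθ] at hR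
  obtain ⟨n₀, hn₀⟩ := eventually_atTop.1 ((eventually_inv_mul_log_rpow_mem_Ioo δ).and
    ((eventually_const_mul_inv_sq_le_inv_mul_log_rpow δ (c := c₁ / 2)
      (by positivity : 0 < Cm * (c₂ + 2)) (by positivity)).and (eventually_ge_atTop 1)))
  refine ⟨n₀, fun n hn k _ hk _ hgap => ?_⟩
  obtain ⟨⟨hρ0, hρ1⟩, hsmall, hn1⟩ := hn₀ n hn
  set ρ := (n : ℝ)⁻¹ * Real.log n ^ (-δ)
  obtain ⟨hσl, hσu⟩ := hball ρ hρ0 hρ1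
  simp only [← measureReal_def] at hσl hσu ⊢
  have hσc₂ : μ.real (ball x ρ) ≤ c₂ := hσu.trans (mul_le_of_le_one_right hc₂.le hρ1.le)
  obtain ⟨κ, hκ, hκk⟩ := exists_strictMono_eq_of_lt_succ (k := fun j => k (j + 1)) (m := m)
    fun j hj => hk (j + 1) (by omega)
  have hθg : ∀ j < m, θ ^ (κ (j + 1) - κ j) ≤ ((n : ℝ) ^ 2)⁻¹ := fun j hj => by
    refine pow_le_inv_sq_of_mul_log_le hθ0 hθ1 hR (by exact_mod_cast hn1) ?_
    rw [hκk j hj.le, hκk (j + 1) hj, Nat.cast_sub (hk (j + 1) (by omega)).le]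
    exact hgap (j + 1) (by omega)
  have hmix : HasBVMultipleMixing μ T Cm θ := hmmix
  have hbounds := hmix.measureReal_biInter_preimage_ball_mem_Icc hCm.le hθ0.le
    hT.measurable x ρ hκ m fun j hj => calc
      _ ≤ Cm * (c₂ + 2) * ((n : ℝ) ^ 2)⁻¹ := by gcongr; exact hθg j hj
      _ ≤ c₁ / 2 * ρ := hsmall
      _ ≤ _ := by linarith
  rwa [biInter_Icc_one_eq_biInter_range (fun j => T^[k j] ⁻¹' ball x ρ),
    iInter₂_congr fun j hj => by rw [← hκk j (Nat.lt_succ_iff.1 (Finset.mem_range.1 hj))]]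

/-- Condition (GM1)_r for balls around a Diophantine point of a piecewise expanding map:
given the BV multiple-mixing inequality, for targets `B(x, ρ_n)` with
`ρ_n = n^{-1}(ln n)^{-δ}`, separation `s(n) = R ln n` with `R` large gives
`C⁻¹ σ(ρ_n)^r ≤ μ(⋂_j T^{-k_j} B(x,ρ_n)) ≤ C σ(ρ_n)^r`. -/
theorem stmt17 (μ : Measure ℝ) [IsProbabilityMeasure μ]
    (T : ℝ → ℝ) (hT : MeasurePreserving T μ μ)
    (Cm θ : ℝ) (hCm : 0 < Cm) (hθ0 : 0 < θ) (hθ1 : θ < 1)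
    -- BV multiple-mixing inequality (conclusion of the previous statement)
    (hmmix : ∀ (q : ℕ), 1 ≤ q → ∀ (ψ : ℕ → ℝ → ℝ),
      (∀ j x, 0 ≤ ψ j x) →
      (∀ j, eVariationOn (ψ j) (Set.Icc 0 1) ≠ ⊤) →
      ∀ (k : ℕ → ℕ), StrictMono k →
      ((∏ j ∈ Finset.range (q - 1),
          ((∫ x, |ψ j x| ∂μ) -
            Cm * ((∫ x, |ψ j x| ∂μ) + (eVariationOn (ψ j) (Set.Icc 0 1)).toReal) *
              θ ^ (k (j + 1) - k j))) * (∫ x, |ψ (q - 1) x| ∂μ) ≤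
        ∫ x, ∏ j ∈ Finset.range q, ψ j (T^[k j] x) ∂μ) ∧
      ((∫ x, ∏ j ∈ Finset.range q, ψ j (T^[k j] x) ∂μ) ≤
        (∏ j ∈ Finset.range (q - 1),
          ((∫ x, |ψ j x| ∂μ) +
            Cm * ((∫ x, |ψ j x| ∂μ) + (eVariationOn (ψ j) (Set.Icc 0 1)).toReal) *
              θ ^ (k (j + 1) - k j))) * (∫ x, |ψ (q - 1) x| ∂μ)))
    (x : ℝ)
    -- `x` is a Diophantine point
    (hdio : ∃ ε > (0 : ℝ), ∃ ρ₀ > (0 : ℝ), ∀ ρ : ℝ, 0 < ρ → ρ ≤ ρ₀ →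
      ∀ k : ℕ, 0 < k → (k : ℝ) ≤ ε * |Real.log ρ| →
        T^[k] ⁻¹' ball x ρ ∩ ball x ρ = ∅)
    (c₁ c₂ : ℝ) (hc₁ : 0 < c₁) (hc₂ : 0 < c₂)
    -- ball measure comparable to radius
    (hball : ∀ ρ : ℝ, 0 < ρ → ρ < 1 →
      c₁ * ρ ≤ (μ (ball x ρ)).toReal ∧ (μ (ball x ρ)).toReal ≤ c₂ * ρ)
    (δ : ℝ) (hδ : 0 < δ) (r : ℕ) (hr : 1 ≤ r) :
    ∃ R₀ > (0 : ℝ), ∀ R : ℝ, R₀ ≤ R → ∃ C > (0 : ℝ), ∃ n₀ : ℕ, ∀ n : ℕ, n₀ ≤ n →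
      ∀ k : ℕ → ℕ, k 0 = 0 → (∀ j < r, k j < k (j + 1)) → k r ≤ n →
        (∀ j < r, R * Real.log n ≤ (k (j + 1) : ℝ) - (k j : ℝ)) →
        C⁻¹ * ((μ (ball x ((n : ℝ)⁻¹ * Real.log n ^ (-δ)))).toReal) ^ r ≤
            (μ (⋂ j ∈ Finset.Icc 1 r,
              T^[k j] ⁻¹' ball x ((n : ℝ)⁻¹ * Real.log n ^ (-δ)))).toReal ∧
          (μ (⋂ j ∈ Finset.Icc 1 r,
              T^[k j] ⁻¹' ball x ((n : ℝ)⁻¹ * Real.log n ^ (-δ)))).toReal ≤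
            C * ((μ (ball x ((n : ℝ)⁻¹ * Real.log n ^ (-δ)))).toReal) ^ r :=
  stmt17_general μ T hT Cm θ hCm hθ0 hθ1 hmmix x c₁ c₂ hc₁ hc₂ hball δ r hr
end

section
/- In the setting of dispersing billiards with invariant measure μ, let R_Bid = {x ∈ 𝓜 : limsup_n (|ln d_n^{(r)}(x,x)| − (1/2) ln n)/(ln ln n) = 1/(2r)}, where d_n^{(r)}(x,x) is the r-th minimum of d(x, F x), ..., d(x, F^n x). Suppose for x in a full-measure set the derivative bound ‖D_z F‖ ≤ c m² holds on a neighborhood of x (x in homogeneity strip H_m). Then R_Bid minus a null set is contained in F^{-1}R_Bid, hence μ(R_Bid Δ F^{-1}R_Bid) = 0; by ergodicity μ(R_Bid) ∈ {0, 1}. -/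
/-!
Where `F` is `K`-Lipschitz near `x`, the `r`-th return distance of `F x` is at most `K` times
that of `x` as soon as the latter is small, so `|ln d_n(F x)| ≥ |ln d_n(x)| - ln K`; since
`ln K / ln ln n → 0`, the positive part `g` of the log-law exponent satisfies `g ≤ g ∘ F` a.e.
For a measure-preserving map of a finite measure space this forces `g ∘ F = g` a.e.: each
superlevel set `{g > q}` is a.e. contained in its preimage, which has the same measure. Hence the
level set `R = {g = 1/(2r)}` is a.e. invariant, and ergodicity gives `μ R ∈ {0, 1}`.
The points with `r` exact returns, where `ln 0 = 0` spoils the comparison, form a forward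
invariant set, so the same measure argument shows they are a.e. backward invariant as well.
Measurability comes from the a.e. continuity of all iterates of `F`.
-/

open MeasureTheory Filter Topology

open Finset in
theorem Finset.isClosed_setOf_le_card_filter_le {ι α : Type*} [TopologicalSpace α]
    [LinearOrder α] [ClosedIciTopology α] (s : Finset ι) (d : ι → α) (r : ℕ) :
    IsClosed {ρ : α | r ≤ #{k ∈ s | d k ≤ ρ}} := by
  have h : {ρ : α | r ≤ #{k ∈ s | d k ≤ ρ}} =
      ⋃ t ∈ s.powersetCard r, ⋂ k ∈ t, Set.Ici (d k) := by
    ext ρ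
    simp only [Set.mem_ofPred_eq, Finset.le_card_iff_exists_subset_card, Set.mem_iUnion,
      Finset.mem_powersetCard, Set.mem_iInter, Set.mem_Ici, Finset.subset_iff, Finset.mem_filter]
    grind
  rw [h]
  exact (s.powersetCard r).finite_toSet.isClosed_biUnion fun t _ =>
    isClosed_biInter fun k _ => isClosed_Ici

theorem AEMeasurable.of_ae_continuousAt {α β : Type*} [MeasurableSpace α] [TopologicalSpace α]
    [OpensMeasurableSpace α] [PseudoEMetricSpace β] [MeasurableSpace β] [BorelSpace β]
    {μ : Measure α} {f : α → β} (h : ∀ᵐ x ∂μ, ContinuousAt f x) :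
    AEMeasurable f μ := by
  have hf : ContinuousOn f {x | ContinuousAt f x} := fun _ hx => hx.continuousWithinAt
  have := hf.aemeasurable (μ := μ) (measurableSet_of_continuousAt f)
  rwa [Measure.restrict_eq_self_of_ae_mem (s := {x | ContinuousAt f x}) h] at this

theorem AEMeasurable.limsup_atTop {α δ : Type*} [ConditionallyCompleteLinearOrder α]
    [TopologicalSpace α] [OrderTopology α] [SecondCountableTopology α] [MeasurableSpace α]
    [BorelSpace α] [MeasurableSpace δ] {μ : Measure δ} {f : ℕ → δ → α}
    (hf : ∀ i, AEMeasurable (f i) μ) :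
    AEMeasurable (fun x => limsup (fun i => f i x) atTop) μ := by
  refine ⟨fun x => limsup (fun i => (hf i).mk (f i) x) atTop,
    .limsup fun i => (hf i).measurable_mk, ?_⟩
  filter_upwards [ae_all_iff.2 fun i => (hf i).ae_eq_mk] with x hx
  simp only [hx]

namespace MeasureTheory.MeasurePreserving

variable {α : Type*} [MeasurableSpace α] {μ : Measure α} {F : α → α}

theorem preimage_ae_eq_of_ae_le_preimage [IsFiniteMeasure μ] (hF : MeasurePreserving F μ μ)
    {s : Set α} (hs : NullMeasurableSet s μ) (h : s ≤ᵐ[μ] F ⁻¹' s) :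
    F ⁻¹' s =ᵐ[μ] s :=
  (ae_eq_of_ae_subset_of_measure_ge h (hF.measure_preimage hs).le hs (measure_ne_top μ _)).symm

theorem comp_ae_eq_of_ae_le_comp [IsFiniteMeasure μ] (hF : MeasurePreserving F μ μ)
    {g : α → EReal} (hg : AEMeasurable g μ) (h : g ≤ᵐ[μ] g ∘ F) :
    g ∘ F =ᵐ[μ] g := by
  have hlevel : ∀ q : ℚ,
      F ⁻¹' {x | ((q : ℝ) : EReal) < g x} =ᵐ[μ] {x | ((q : ℝ) : EReal) < g x} :=
    fun q => hF.preimage_ae_eq_of_ae_le_preimage (hg.nullMeasurable measurableSet_Ioi)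
      (h.mono fun x hx hq => lt_of_lt_of_le hq hx)
  filter_upwards [h, ae_all_iff.2 hlevel] with x hle hq
  refine le_antisymm (not_lt.1 fun hlt => ?_) hle
  obtain ⟨q, hgq, hqg⟩ := EReal.exists_rat_btwn_of_lt hlt
  have := hq q
  simp only [Set.preimage_ofPred_eq, eq_iff_iff] at this
  exact (lt_asymm hgq) (this.1 hqg)

theorem ae_continuousAt_iterate [TopologicalSpace α] (hF : MeasurePreserving F μ μ)
    (h : ∀ᵐ x ∂μ, ContinuousAt F x) : ∀ᵐ x ∂μ, ∀ k, ContinuousAt F^[k] x := by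
  filter_upwards [ae_all_iff.2 fun j => (hF.iterate j).quasiMeasurePreserving.ae h] with x hx k
  induction k with
  | zero => exact continuousAt_id
  | succ k ih =>
    rw [Function.iterate_succ']
    exact (hx k).comp ih

end MeasureTheory.MeasurePreserving

theorem Real.limsup_eq_iff_limsup_coe_eq {ι : Type*} {l : Filter ι} [l.NeBot] {u : ι → ℝ}
    {c : ℝ} (hc : c ≠ 0) : limsup u l = c ↔ limsup (fun i => (u i : EReal)) l = c := by
  by_cases hbdd : l.IsBoundedUnder (· ≤ ·) u ∧ l.IsCoboundedUnder (· ≤ ·) u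
  · have := EReal.coe_strictMono.monotone.map_limsup_of_continuousAt u
      (EReal.continuous_coe_iff.2 continuous_id).continuousAt hbdd.1 hbdd.2
    rw [Function.comp_def] at this
    rw [← this, EReal.coe_eq_coe_iff]
  refine ⟨fun h => ?_, fun h => (hbdd ⟨?_, ?_⟩).elim⟩
  · rcases not_and_or.1 hbdd with hb | hb
    · exact (hc (h.symm.trans (Real.limsup_of_not_isBoundedUnder hb))).elim
    · exact (hc (h.symm.trans (Real.limsup_of_not_isCoboundedUnder hb))).elim
  · have hlt : limsup (fun i => (u i : EReal)) l < ((c + 1 : ℝ) : EReal) := by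
      rw [h]; exact_mod_cast lt_add_one c
    exact ⟨c + 1, (eventually_lt_of_limsup_lt hlt).mono fun i hi => by exact_mod_cast hi.le⟩
  · have hlt : ((c - 1 : ℝ) : EReal) < limsup (fun i => (u i : EReal)) l := by
      rw [h]; exact_mod_cast sub_one_lt c
    exact IsCoboundedUnder.of_frequently_ge
      ((frequently_lt_of_lt_limsup (by isBoundedDefault) hlt).mono fun i hi => by
        exact_mod_cast hi.le)

theorem EReal.limsup_coe_le_of_eventually_le_add {ι : Type*} {l : Filter ι} [l.NeBot]
    {u v e : ι → ℝ} (he : Tendsto e l (𝓝 0)) (h : ∀ᶠ i in l, u i ≤ v i + e i) :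
    limsup (fun i => (u i : EReal)) l ≤ limsup (fun i => (v i : EReal)) l := by
  have hlim : limsup (fun i => (e i : EReal)) l = 0 := (EReal.tendsto_coe.2 he).limsup_eq
  calc limsup (fun i => (u i : EReal)) l
      ≤ limsup ((fun i => (v i : EReal)) + fun i => (e i : EReal)) l :=
        limsup_le_limsup (h.mono fun i hi => by simpa using (EReal.coe_le_coe_iff.2 hi))
    _ ≤ limsup (fun i => (v i : EReal)) l + limsup (fun i => (e i : EReal)) l :=
        EReal.limsup_add_le (.inr (by simp [hlim])) (.inr (by simp [hlim]))
    _ = limsup (fun i => (v i : EReal)) l := by rw [hlim, add_zero]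

theorem EReal.limsup_coe_max_zero {ι : Type*} {l : Filter ι} [l.NeBot] (u : ι → ℝ) :
    limsup (fun i => ((max (u i) 0 : ℝ) : EReal)) l =
      max (limsup (fun i => (u i : EReal)) l) 0 := by
  have := (monotone_id.max monotone_const).map_limsup_of_continuousAt (F := l)
    (fun i => (u i : EReal)) (continuous_id.max (continuous_const (y := (0 : EReal)))).continuousAt
  simpa [Function.comp_def, EReal.coe_strictMono.monotone.map_max] using this.symm

theorem Real.limsup_eq_iff_limsup_coe_max_zero_eq {ι : Type*} {l : Filter ι} [l.NeBot]
    {u : ι → ℝ} {c : ℝ} (hc : 0 < c) :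
    limsup u l = c ↔ limsup (fun i => ((max (u i) 0 : ℝ) : EReal)) l = c := by
  rw [Real.limsup_eq_iff_limsup_coe_eq hc.ne', EReal.limsup_coe_max_zero]
  have hc' : (0 : EReal) < c := EReal.coe_pos.2 hc
  constructor
  · intro h
    rw [h, max_eq_left hc'.le]
  · intro h
    rcases le_total (limsup (fun i => (u i : EReal)) l) 0 with h0 | h0
    · rw [max_eq_right h0] at h
      exact absurd h hc'.ne
    · rwa [max_eq_left h0] at h

section ReturnDistance

open Finset

variable {M : Type*} [MetricSpace M] {F : M → M} {r m n : ℕ} {x y : M} {ρ c K ε : ℝ}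

variable (F) in
noncomputable def returnTimes (n : ℕ) (ρ : ℝ) (x : M) : Finset ℕ :=
  {k ∈ Icc 1 n | dist x (F^[k] x) ≤ ρ}

variable (F) in
def returnRadii (r n : ℕ) (x : M) : Set ℝ :=
  {ρ | 0 ≤ ρ ∧ r ≤ #(returnTimes F n ρ x)}

variable (F) in
/-- The `r`-th smallest of `dist x (F^[k] x)`, `1 ≤ k ≤ n`: the paper's `d_n^{(r)}(x, x)`. -/
noncomputable def rthReturnDist (r n : ℕ) (x : M) : ℝ :=
  sInf (returnRadii F r n x)

theorem ncard_setOf_eq_card_returnTimes :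
    {k | 1 ≤ k ∧ k ≤ n ∧ dist x (F^[k] x) ≤ ρ}.ncard = #(returnTimes F n ρ x) := by
  rw [← Set.ncard_coe_finset]
  congr 1
  ext k
  simp [returnTimes, and_assoc]

theorem bddBelow_returnRadii : BddBelow (returnRadii F r n x) :=
  ⟨0, fun _ hρ => hρ.1⟩

theorem rthReturnDist_nonneg : 0 ≤ rthReturnDist F r n x :=
  Real.sInf_nonneg fun _ hρ => hρ.1

theorem returnRadii_nonempty (hn : r ≤ n) : (returnRadii F r n x).Nonempty := by
  refine ⟨∑ k ∈ Icc 1 n, dist x (F^[k] x), sum_nonneg fun _ _ => dist_nonneg, ?_⟩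
  have : returnTimes F n (∑ k ∈ Icc 1 n, dist x (F^[k] x)) x = Icc 1 n :=
    filter_true_of_mem fun k hk =>
      single_le_sum (f := fun k => dist x (F^[k] x)) (fun _ _ => dist_nonneg) hk
  simpa [this] using hn

theorem isClosed_returnRadii : IsClosed (returnRadii F r n x) :=
  (isClosed_Ici (a := (0 : ℝ))).inter ((Icc 1 n).isClosed_setOf_le_card_filter_le _ r)

theorem le_card_returnTimes_rthReturnDist (hn : r ≤ n) :
    r ≤ #(returnTimes F n (rthReturnDist F r n x) x) :=
  (isClosed_returnRadii.csInf_mem (returnRadii_nonempty hn) bddBelow_returnRadii).2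

theorem rthReturnDist_le_of_forall (hn : r ≤ n) (hc : 0 ≤ c)
    (h : ∀ k ∈ returnTimes F n (rthReturnDist F r n x) x, dist y (F^[k] y) ≤ c) :
    rthReturnDist F r n y ≤ c := by
  refine csInf_le bddBelow_returnRadii
    ⟨hc, (le_card_returnTimes_rthReturnDist (F := F) (x := x) hn).trans ?_⟩
  exact card_le_card fun k hk => mem_filter.2 ⟨(mem_filter.1 hk).1, h k hk⟩

theorem rthReturnDist_le_of_le (hm : r ≤ m) (hmn : m ≤ n) :
    rthReturnDist F r n x ≤ rthReturnDist F r m x := by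
  refine csInf_le_csInf bddBelow_returnRadii (returnRadii_nonempty hm) fun ρ hρ => ⟨hρ.1, ?_⟩
  exact hρ.2.trans (card_le_card (filter_subset_filter _ (Icc_subset_Icc_right hmn)))

theorem rthReturnDist_of_lt (hn : n < r) : rthReturnDist F r n x = 0 := by
  have : returnRadii F r n x = ∅ := Set.eq_empty_of_forall_notMem fun ρ hρ =>
    (hρ.2.trans ((card_filter_le _ _).trans (Nat.card_Icc 1 n).le)).not_gt (by omega)
  rw [rthReturnDist, this, Real.sInf_empty]

theorem rthReturnDist_le_add (hn : r ≤ n) (hε : 0 ≤ ε)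
    (h : ∀ k ∈ Icc 1 n, dist y (F^[k] y) ≤ dist x (F^[k] x) + ε) :
    rthReturnDist F r n y ≤ rthReturnDist F r n x + ε :=
  rthReturnDist_le_of_forall hn (add_nonneg rthReturnDist_nonneg hε) fun k hk =>
    (h k (mem_filter.1 hk).1).trans (by linarith [(mem_filter.1 hk).2])

theorem continuousAt_rthReturnDist (h : ∀ k, ContinuousAt F^[k] x) :
    ContinuousAt (rthReturnDist F r n) x := by
  rcases lt_or_ge n r with hn | hn
  · rw [show rthReturnDist F r n = fun _ => 0 from funext fun _ => rthReturnDist_of_lt hn]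
    exact continuousAt_const
  refine Metric.tendsto_nhds.2 fun ε hε => ?_
  have hclose : ∀ᶠ y in 𝓝 x, ∀ k ∈ Icc 1 n,
      |dist y (F^[k] y) - dist x (F^[k] x)| < ε / 2 :=
    (eventually_all_finset _).2 fun k _ => by
      simpa [Real.dist_eq] using
        Metric.tendsto_nhds.1 (tendsto_id.dist (h k)) (ε / 2) (by positivity)
  filter_upwards [hclose] with y hy
  have hyx := rthReturnDist_le_add (F := F) (r := r) (x := x) (y := y) hn (half_pos hε).le
    fun k hk => by linarith [(abs_lt.1 (hy k hk)).2]
  have hxy := rthReturnDist_le_add (F := F) (r := r) (x := y) (y := x) hn (half_pos hε).le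
    fun k hk => by linarith [(abs_lt.1 (hy k hk)).1]
  rw [Real.dist_eq, abs_lt]
  constructor <;> linarith

theorem aemeasurable_rthReturnDist [MeasurableSpace M] [BorelSpace M] {μ : Measure M}
    (h : ∀ᵐ x ∂μ, ∀ k, ContinuousAt F^[k] x) : AEMeasurable (rthReturnDist F r n) μ :=
  .of_ae_continuousAt (h.mono fun _ hx => continuousAt_rthReturnDist hx)

theorem rthReturnDist_apply_le_mul (hn : r ≤ n) (hK : 0 ≤ K)
    (hρ : rthReturnDist F r n x < ρ)
    (hL : ∀ y ∈ Metric.ball x ρ, dist (F x) (F y) ≤ K * dist x y) :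
    rthReturnDist F r n (F x) ≤ K * rthReturnDist F r n x := by
  refine rthReturnDist_le_of_forall (x := x) hn (mul_nonneg hK rthReturnDist_nonneg) fun k hk => ?_
  have hk := (mem_filter.1 hk).2
  rw [(Function.Commute.iterate_self F k).eq]
  calc dist (F x) (F (F^[k] x)) ≤ K * dist x (F^[k] x) :=
        hL _ (Metric.mem_ball'.2 (hk.trans_lt hρ))
    _ ≤ K * rthReturnDist F r n x := mul_le_mul_of_nonneg_left hk hK

-- Where `rthReturnDist` vanishes, `Real.log 0 = 0` turns `logLawRatio` into junk.
variable (F) in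
def exactReturnSet (r : ℕ) : Set M :=
  {x | ∃ n, r ≤ n ∧ rthReturnDist F r n x = 0}

theorem mapsTo_exactReturnSet (hx : x ∈ exactReturnSet F r) : F x ∈ exactReturnSet F r := by
  obtain ⟨n, hn, hx⟩ := hx
  refine ⟨n, hn, le_antisymm (rthReturnDist_le_of_forall (x := x) hn le_rfl fun k hk => ?_)
    rthReturnDist_nonneg⟩
  have hfix : F^[k] x = x := (dist_le_zero.1 (hx ▸ (mem_filter.1 hk).2)).symm
  rw [(Function.Commute.iterate_self F k).eq, hfix, dist_self]

theorem eventually_rthReturnDist_eq_zero (hx : x ∈ exactReturnSet F r) :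
    ∀ᶠ n in atTop, rthReturnDist F r n x = 0 := by
  obtain ⟨m, hm, hx⟩ := hx
  filter_upwards [eventually_ge_atTop m] with n hn
  exact le_antisymm (hx ▸ rthReturnDist_le_of_le hm hn) rthReturnDist_nonneg

theorem rthReturnDist_pos_of_notMem (hx : x ∉ exactReturnSet F r) (hn : r ≤ n) :
    0 < rthReturnDist F r n x :=
  rthReturnDist_nonneg.lt_of_ne fun h => hx ⟨n, hn, h.symm⟩

theorem nullMeasurableSet_exactReturnSet [MeasurableSpace M] [BorelSpace M] {μ : Measure M}
    (h : ∀ᵐ x ∂μ, ∀ k, ContinuousAt F^[k] x) :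
    NullMeasurableSet (exactReturnSet F r) μ := by
  have : exactReturnSet F r = ⋃ n, ⋃ (_ : r ≤ n), rthReturnDist F r n ⁻¹' {0} := by
    ext x
    simp [exactReturnSet]
  rw [this]
  exact .iUnion fun n => .iUnion fun _ =>
    (aemeasurable_rthReturnDist h).nullMeasurable (measurableSet_singleton 0)

end ReturnDistance

section LogLaw

open Real

variable {M : Type*} [MetricSpace M] {F : M → M} {r : ℕ} {x : M}

noncomputable def logLawRatio (n : ℕ) (d : ℝ) : ℝ :=
  (|log d| - log n / 2) / log (log n)

theorem measurable_logLawRatio (n : ℕ) : Measurable (logLawRatio n) := by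
  unfold logLawRatio
  fun_prop

theorem logLawRatio_sub_le {n : ℕ} {K d d' : ℝ} (hK : 1 ≤ K) (hd' : 0 < d')
    (hd'd : d' ≤ K * d) (hKd : K * d ≤ 1) (hn : 0 < log (log n)) :
    logLawRatio n d - log K / log (log n) ≤ logLawRatio n d' := by
  have hd : 0 < d := pos_of_mul_pos_right (hd'.trans_le hd'd) (by linarith)
  have hd1 : d ≤ 1 := le_trans (le_mul_of_one_le_left hd.le hK) hKd
  have hlog : |log d| - log K ≤ |log d'| := by
    rw [abs_of_nonpos (log_nonpos hd.le hd1),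
      abs_of_nonpos (log_nonpos hd'.le (hd'd.trans hKd))]
    have := log_le_log hd' hd'd
    rw [log_mul (by linarith) hd.ne'] at this
    linarith
  rw [logLawRatio, logLawRatio, div_sub_div_same]
  exact div_le_div_of_nonneg_right (by linarith) hn.le

theorem lt_of_logLawRatio_pos {n : ℕ} {d D c : ℝ} (hpos : 0 < logLawRatio n d)
    (hd : 0 ≤ d) (hdD : d ≤ D) (hD : 2 * log D < log n) (hc : 0 < c)
    (hcn : -(2 * log c) < log n) (hn : 0 < log (log n)) : d < c := by
  have hlogn : 1 < log n := (log_pos_iff (log_natCast_nonneg n)).1 hn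
  have habs : log n / 2 < |log d| := by
    have := (div_pos_iff_of_pos_right hn).1 hpos
    linarith
  have hd0 : 0 < d := hd.lt_of_ne fun h => by
    rw [← h, log_zero, abs_zero] at habs
    linarith
  rcases lt_abs.1 habs with h | h
  · linarith [log_le_log hd0 hdD]
  · exact (log_lt_log_iff hd0 hc).1 (by linarith)

theorem tendsto_log_log_natCast_atTop : Tendsto (fun n : ℕ => log (log n)) atTop atTop :=
  tendsto_log_atTop.comp (tendsto_log_atTop.comp tendsto_natCast_atTop_atTop)

theorem eventually_max_logLawRatio_le {K ρ : ℝ} (hK : 1 ≤ K) (hρ : 0 < ρ)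
    (hL : ∀ y ∈ Metric.ball x ρ, dist (F x) (F y) ≤ K * dist x y)
    (hx : F x ∈ exactReturnSet F r → x ∈ exactReturnSet F r) :
    ∀ᶠ n in atTop, max (logLawRatio n (rthReturnDist F r n x)) 0 ≤
      max (logLawRatio n (rthReturnDist F r n (F x))) 0 + log K / log (log n) := by
  have hlog : Tendsto (fun n : ℕ => log n) atTop atTop :=
    tendsto_log_atTop.comp tendsto_natCast_atTop_atTop
  have herr : ∀ᶠ n : ℕ in atTop, 0 ≤ log K / log (log n) :=
    (tendsto_log_log_natCast_atTop.eventually_gt_atTop 0).mono fun n hn =>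
      div_nonneg (log_nonneg hK) hn.le
  have htriv : ∀ᶠ n : ℕ in atTop, logLawRatio n (rthReturnDist F r n x) ≤ 0 →
      max (logLawRatio n (rthReturnDist F r n x)) 0 ≤
        max (logLawRatio n (rthReturnDist F r n (F x))) 0 + log K / log (log n) :=
    herr.mono fun n he hneg => by
      rw [max_eq_right hneg]
      exact add_nonneg (le_max_right _ _) he
  by_cases hxS : x ∈ exactReturnSet F r
  · filter_upwards [htriv, eventually_rthReturnDist_eq_zero hxS,
      tendsto_log_log_natCast_atTop.eventually_gt_atTop 0, hlog.eventually_ge_atTop 0]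
      with n htriv hzero hloglog hlogn
    refine htriv ?_
    rw [hzero, logLawRatio, log_zero, abs_zero, zero_sub]
    exact div_nonpos_of_nonpos_of_nonneg (by linarith) hloglog.le
  have hK0 : 0 < K := one_pos.trans_le hK
  have hc : 0 < min ρ K⁻¹ := lt_min hρ (inv_pos.2 hK0)
  filter_upwards [htriv, eventually_ge_atTop r, tendsto_log_log_natCast_atTop.eventually_gt_atTop 0,
    hlog.eventually_gt_atTop (2 * log (rthReturnDist F r r x)),
    hlog.eventually_gt_atTop (-(2 * log (min ρ K⁻¹)))] with n htriv hrn hloglog hD hcn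
  rcases le_or_gt (logLawRatio n (rthReturnDist F r n x)) 0 with hneg | hpos
  · exact htriv hneg
  have hdc := lt_of_logLawRatio_pos hpos rthReturnDist_nonneg
    (rthReturnDist_le_of_le le_rfl hrn) hD hc hcn hloglog
  have hFx := rthReturnDist_apply_le_mul hrn hK0.le (hdc.trans_le (min_le_left _ _)) hL
  have hKd : K * rthReturnDist F r n x ≤ 1 := by
    calc K * rthReturnDist F r n x ≤ K * K⁻¹ := by
          gcongr
          exact hdc.le.trans (min_le_right _ _)
      _ = 1 := mul_inv_cancel₀ hK0.ne'
  have := logLawRatio_sub_le hK (rthReturnDist_pos_of_notMem (mt hx hxS) hrn) hFx hKd hloglog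
  rw [max_eq_left hpos.le]
  linarith [le_max_left (logLawRatio n (rthReturnDist F r n (F x))) 0]

variable (F r) in
-- Truncated at `0`, since the comparison of `x` with `F x` only works at times where the ratio
-- at `x` is positive.
noncomputable def logLawExponent (x : M) : EReal :=
  limsup (fun n => ((max (logLawRatio n (rthReturnDist F r n x)) 0 : ℝ) : EReal)) atTop

theorem logLawExponent_le_apply
    (hL : ∃ K ρ, 0 < ρ ∧ ∀ y ∈ Metric.ball x ρ, dist (F x) (F y) ≤ K * dist x y)
    (hx : F x ∈ exactReturnSet F r → x ∈ exactReturnSet F r) :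
    logLawExponent F r x ≤ logLawExponent F r (F x) := by
  obtain ⟨K, ρ, hρ, hL⟩ := hL
  have hL' : ∀ y ∈ Metric.ball x ρ, dist (F x) (F y) ≤ max K 1 * dist x y := fun y hy =>
    (hL y hy).trans (mul_le_mul_of_nonneg_right (le_max_left K 1) dist_nonneg)
  exact EReal.limsup_coe_le_of_eventually_le_add
    (tendsto_const_nhds.div_atTop tendsto_log_log_natCast_atTop)
    (eventually_max_logLawRatio_le (le_max_right K 1) hρ hL' hx)

theorem aemeasurable_logLawExponent [MeasurableSpace M] [BorelSpace M] {μ : Measure M}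
    (h : ∀ᵐ x ∂μ, ∀ k, ContinuousAt F^[k] x) : AEMeasurable (logLawExponent F r) μ :=
  .limsup_atTop fun n => ((measurable_logLawRatio n).max measurable_const).coe_real_ereal
    |>.comp_aemeasurable (aemeasurable_rthReturnDist h)

end LogLaw

/-- Essential invariance of the multiple-Logarithm-Law limsup set for dispersing billiards:
if a.e. point has a local Lipschitz bound for `F`, then the set
`R = {x : limsup (|ln d_n^{(r)}(x,x)| − ½ ln n)/ln ln n = 1/(2r)}` satisfies
`μ(R Δ F⁻¹R) = 0`, hence by ergodicity `μ(R) ∈ {0,1}`. -/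
theorem stmt18 {M : Type*} [MetricSpace M] [MeasurableSpace M] [BorelSpace M]
    (μ : Measure M) [IsProbabilityMeasure μ]
    (F : M → M) (hF : MeasurePreserving F μ μ) (herg : Ergodic F μ)
    (r : ℕ) (hr : 1 ≤ r)
    -- a.e. local Lipschitz bound (‖D_z F‖ ≤ c m² near x in a homogeneity strip)
    (hLip : ∀ᵐ x ∂μ, ∃ K > (0 : ℝ), ∃ ρ > (0 : ℝ),
      ∀ y ∈ Metric.ball x ρ, ∀ z ∈ Metric.ball x ρ, dist (F y) (F z) ≤ K * dist y z) :
    let dnr : ℕ → M → ℝ := fun n x =>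
      sInf {ρ : ℝ | 0 ≤ ρ ∧ r ≤ Set.ncard {k | 1 ≤ k ∧ k ≤ n ∧ dist x (F^[k] x) ≤ ρ}}
    let R : Set M := {x |
      limsup (fun n : ℕ =>
        (|Real.log (dnr n x)| - Real.log n / 2) / Real.log (Real.log n)) atTop
        = 1 / (2 * r)}
    μ (symmDiff R (F ⁻¹' R)) = 0 ∧ (μ R = 0 ∨ μ R = 1) := by
  intro dnr R
  have hc : (0 : ℝ) < 1 / (2 * r) := by
    have : (0 : ℝ) < r := by exact_mod_cast hr
    positivity
  have hR : R = logLawExponent F r ⁻¹' {((1 / (2 * r) : ℝ) : EReal)} := by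
    ext x
    simp only [R, dnr, ncard_setOf_eq_card_returnTimes]
    exact Real.limsup_eq_iff_limsup_coe_max_zero_eq hc
  have hcont : ∀ᵐ x ∂μ, ∀ k, ContinuousAt F^[k] x :=
    hF.ae_continuousAt_iterate <| hLip.mono fun x ⟨K, _, ρ, hρ, hL⟩ =>
      continuousAt_of_locally_lipschitz hρ K fun y hy => hL y hy x (Metric.mem_ball_self hρ)
  have hS : ∀ᵐ x ∂μ, F x ∈ exactReturnSet F r → x ∈ exactReturnSet F r :=
    (hF.preimage_ae_eq_of_ae_le_preimage (nullMeasurableSet_exactReturnSet hcont)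
      (ae_of_all _ fun _ => mapsTo_exactReturnSet)).le
  have hmono : logLawExponent F r ≤ᵐ[μ] logLawExponent F r ∘ F := by
    filter_upwards [hLip, hS] with x ⟨K, _, ρ, hρ, hL⟩ hx
    exact logLawExponent_le_apply ⟨K, ρ, hρ, hL x (Metric.mem_ball_self hρ)⟩ hx
  have hRinv : F ⁻¹' R =ᵐ[μ] R := by
    rw [hR]
    exact (hF.comp_ae_eq_of_ae_le_comp (aemeasurable_logLawExponent hcont) hmono).preimage _
  refine ⟨measure_symmDiff_eq_zero_iff.2 hRinv.symm, ?_⟩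
  have hRmeas : NullMeasurableSet R μ :=
    hR ▸ (aemeasurable_logLawExponent hcont).nullMeasurable (measurableSet_singleton _)
  rcases herg.quasiErgodic.ae_empty_or_univ₀ hRmeas hRinv with h | h
  · exact .inl (by rw [measure_congr h, measure_empty])
  · exact .inr (by rw [measure_congr h, measure_univ])
end
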